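/- arXiv:1608.05608 — 5 statements merged into one kernel-verified Lean document; each statement's English description precedes it below -/
import Mathlib

section
/- Let g, h be measure-preserving Borel partial isomorphisms of a standard probability space (X,μ). Then d_μ(g, h⁻¹) ≤ d_μ(g, g∘h∘g) + d_μ(h, h∘g∘h), where h⁻¹ : ran h → dom h is the set-theoretic inverse of h and ∘ denotes composition of partial maps. -/
open MeasureTheory Set

/-- A Borel partial isomorphism of a measurable space `X`: a Borel bijection
`toFun : dom → ran` between Borel subsets of `X` (presented via globally
measurable maps `toFun`, `invFun` that are mutually inverse between `dom` and `ran`). -/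
structure PartialIso (X : Type*) [MeasurableSpace X] where
  dom : Set X
  ran : Set X
  toFun : X → X
  invFun : X → X
  measurableSet_dom : MeasurableSet dom
  measurableSet_ran : MeasurableSet ran
  measurable_toFun : Measurable toFun
  measurable_invFun : Measurable invFun
  mapsTo : Set.MapsTo toFun dom ran
  mapsTo_inv : Set.MapsTo invFun ran dom
  left_inv : ∀ x ∈ dom, invFun (toFun x) = x
  right_inv : ∀ y ∈ ran, toFun (invFun y) = y

namespace PartialIso

variable {X : Type*} [MeasurableSpace X]

/-- The pseudometric `d_μ(g,h) = μ(dom g △ dom h) + μ{x ∈ dom g ∩ dom h : g x ≠ h x}`. -/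
noncomputable def dMu (μ : Measure X) (g h : PartialIso X) : ℝ :=
  (μ (symmDiff g.dom h.dom)).toReal +
    (μ {x | x ∈ g.dom ∩ h.dom ∧ g.toFun x ≠ h.toFun x}).toReal

/-- The trace `tr(g) = μ{x ∈ dom g : g x = x}`. -/
noncomputable def tr (μ : Measure X) (g : PartialIso X) : ℝ :=
  (μ {x | x ∈ g.dom ∧ g.toFun x = x}).toReal

/-- `g` is measure-preserving: `μ(g(A)) = μ(A)` for every Borel `A ⊆ dom g`. -/
def MeasurePreservingOn (μ : Measure X) (g : PartialIso X) : Prop :=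
  ∀ A : Set X, A ⊆ g.dom → MeasurableSet A → μ (g.toFun '' A) = μ A

/-- Composition of partial maps: `dom (h ∘ g) = g⁻¹(ran g ∩ dom h)`, `(h ∘ g) x = h (g x)`. -/
def comp (h g : PartialIso X) : PartialIso X where
  dom := g.dom ∩ g.toFun ⁻¹' h.dom
  ran := h.ran ∩ h.invFun ⁻¹' g.ran
  toFun := h.toFun ∘ g.toFun
  invFun := g.invFun ∘ h.invFun
  measurableSet_dom := g.measurableSet_dom.inter (g.measurable_toFun h.measurableSet_dom)
  measurableSet_ran := h.measurableSet_ran.inter (h.measurable_invFun g.measurableSet_ran)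
  measurable_toFun := h.measurable_toFun.comp g.measurable_toFun
  measurable_invFun := g.measurable_invFun.comp h.measurable_invFun
  mapsTo := by
    rintro x ⟨hx1, hx2⟩
    refine ⟨h.mapsTo hx2, ?_⟩
    simp only [Set.mem_preimage, Function.comp_apply]
    rw [h.left_inv _ hx2]
    exact g.mapsTo hx1
  mapsTo_inv := by
    rintro y ⟨hy1, hy2⟩
    refine ⟨g.mapsTo_inv hy2, ?_⟩
    simp only [Set.mem_preimage, Function.comp_apply]
    rw [g.right_inv _ hy2]
    exact h.mapsTo_inv hy1
  left_inv := by
    rintro x ⟨hx1, hx2⟩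
    simp only [Function.comp_apply]
    rw [h.left_inv _ hx2, g.left_inv _ hx1]
  right_inv := by
    rintro y ⟨hy1, hy2⟩
    simp only [Function.comp_apply]
    rw [g.right_inv _ hy2, h.right_inv _ hy1]

/-- The set-theoretic inverse `g⁻¹ : ran g → dom g`. -/
def inv (g : PartialIso X) : PartialIso X where
  dom := g.ran
  ran := g.dom
  toFun := g.invFun
  invFun := g.toFun
  measurableSet_dom := g.measurableSet_ran
  measurableSet_ran := g.measurableSet_dom
  measurable_toFun := g.measurable_invFun
  measurable_invFun := g.measurable_toFun
  mapsTo := g.mapsTo_inv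
  mapsTo_inv := g.mapsTo
  left_inv := g.right_inv
  right_inv := g.left_inv

/-- The identity `1_A` of a Borel set `A`. -/
def idOn (A : Set X) (hA : MeasurableSet A) : PartialIso X where
  dom := A
  ran := A
  toFun := id
  invFun := id
  measurableSet_dom := hA
  measurableSet_ran := hA
  measurable_toFun := measurable_id
  measurable_invFun := measurable_id
  mapsTo := Set.mapsTo_id A
  mapsTo_inv := Set.mapsTo_id A
  left_inv := fun _ _ => rfl
  right_inv := fun _ _ => rfl

end PartialIso

/-!
`h` maps `dom h \ h⁻¹(dom g)` onto `ran h \ dom g`, so by measure preservation the part of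
`ran h` outside `dom g` has the measure of the part of `dom h` where `h ∘ g ∘ h` is undefined.
On `dom g` the maps `g` and `h⁻¹` can only disagree (or `h⁻¹` be undefined) where
`g ∘ h ∘ g ≠ g`: if `g (h (g x)) = g x` then injectivity of `g` gives `h (g x) = x`,
i.e. `h⁻¹ x = g x`.
-/

open scoped ENNReal

namespace PartialIso

variable {X : Type*} [MeasurableSpace X]

noncomputable def edMu (μ : Measure X) (g k : PartialIso X) : ℝ≥0∞ :=
  μ (symmDiff g.dom k.dom) + μ {x | x ∈ g.dom ∩ k.dom ∧ g.toFun x ≠ k.toFun x}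

theorem dMu_eq_toReal_edMu (μ : Measure X) [IsFiniteMeasure μ] (g k : PartialIso X) :
    dMu μ g k = (edMu μ g k).toReal :=
  (ENNReal.toReal_add (measure_ne_top μ _) (measure_ne_top μ _)).symm

theorem edMu_ne_top (μ : Measure X) [IsFiniteMeasure μ] (g k : PartialIso X) :
    edMu μ g k ≠ ∞ :=
  ENNReal.add_ne_top.2 ⟨measure_ne_top μ _, measure_ne_top μ _⟩

def disagreeSet (g k : PartialIso X) : Set X :=
  {x | x ∈ g.dom ∧ (x ∉ k.dom ∨ g.toFun x ≠ k.toFun x)}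

theorem edMu_eq_measure_sdiff_add_measure_disagreeSet (μ : Measure X) (g k : PartialIso X) :
    edMu μ g k = μ (k.dom \ g.dom) + μ (g.disagreeSet k) := by
  have hsplit : μ (g.dom \ k.dom) + μ {x | x ∈ g.dom ∩ k.dom ∧ g.toFun x ≠ k.toFun x} =
      μ (g.disagreeSet k) := by
    rw [← measure_union' _ (g.measurableSet_dom.diff k.measurableSet_dom)]
    · congr 1
      ext x
      simp only [disagreeSet, mem_union, mem_sdiff, mem_inter_iff, mem_ofPred_eq]
      tauto
    · exact disjoint_left.2 fun x hx hx' => hx.2 hx'.1.2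
  rw [edMu, Set.symmDiff_def, measure_union disjoint_sdiff_sdiff
    (k.measurableSet_dom.diff g.measurableSet_dom), add_right_comm, hsplit, add_comm]

theorem measure_disagreeSet_le_edMu (μ : Measure X) (g k : PartialIso X) :
    μ (g.disagreeSet k) ≤ edMu μ g k :=
  (edMu_eq_measure_sdiff_add_measure_disagreeSet μ g k).symm ▸ le_add_self

theorem disagreeSet_inv_subset (g h : PartialIso X) :
    g.disagreeSet h.inv ⊆ g.disagreeSet (g.comp (h.comp g)) := by
  rintro x ⟨hx, hdis⟩
  refine ⟨hx, ?_⟩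
  by_contra! hagree
  obtain ⟨⟨⟨-, hgx⟩, hhgx⟩, hfix⟩ := hagree
  have hx_eq : h.toFun (g.toFun x) = x := by
    have hfix' : g.toFun (h.toFun (g.toFun x)) = g.toFun x := hfix.symm
    simpa only [g.left_inv x hx, g.left_inv (h.toFun (g.toFun x)) hhgx] using
      congrArg g.invFun hfix'
  refine hdis.elim (fun hxr => hxr (hx_eq ▸ h.mapsTo hgx)) fun hne => hne ?_
  change g.toFun x = h.invFun x
  rw [← hx_eq, h.left_inv _ hgx, hx_eq]

theorem image_dom_sdiff_preimage (h : PartialIso X) (A : Set X) :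
    h.toFun '' (h.dom \ h.toFun ⁻¹' A) = h.ran \ A := by
  ext y
  constructor
  · rintro ⟨x, ⟨hx, hxA⟩, rfl⟩
    exact ⟨h.mapsTo hx, hxA⟩
  · rintro ⟨hy, hyA⟩
    refine ⟨h.invFun y, ⟨h.mapsTo_inv hy, ?_⟩, h.right_inv _ hy⟩
    rwa [mem_preimage, h.right_inv _ hy]

theorem MeasurePreservingOn.measure_ran_sdiff {μ : Measure X} {h : PartialIso X}
    (hh : MeasurePreservingOn μ h) {A : Set X} (hA : MeasurableSet A) :
    μ (h.ran \ A) = μ (h.dom \ h.toFun ⁻¹' A) := by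
  rw [← image_dom_sdiff_preimage]
  exact hh _ sdiff_subset (h.measurableSet_dom.diff (h.measurable_toFun hA))

theorem dom_sdiff_preimage_subset_disagreeSet (h g : PartialIso X) :
    h.dom \ h.toFun ⁻¹' g.dom ⊆ h.disagreeSet (h.comp (g.comp h)) :=
  fun _ hx => ⟨hx.1, Or.inl fun hK => hx.2 hK.1.2⟩

theorem edMu_inv_le {μ : Measure X} {g h : PartialIso X} (hh : MeasurePreservingOn μ h) :
    edMu μ g h.inv ≤ edMu μ g (g.comp (h.comp g)) + edMu μ h (h.comp (g.comp h)) := by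
  rw [edMu_eq_measure_sdiff_add_measure_disagreeSet, add_comm (edMu μ g _)]
  gcongr
  · change μ (h.ran \ g.dom) ≤ _
    rw [hh.measure_ran_sdiff g.measurableSet_dom]
    exact (measure_mono (dom_sdiff_preimage_subset_disagreeSet h g)).trans
      (measure_disagreeSet_le_edMu μ _ _)
  · exact (measure_mono (disagreeSet_inv_subset g h)).trans (measure_disagreeSet_le_edMu μ _ _)

end PartialIso

theorem dMu_inv_le_general {X : Type*} [MeasurableSpace X]
    (μ : Measure X) [IsProbabilityMeasure μ] (g h : PartialIso X)
    (hh : PartialIso.MeasurePreservingOn μ h) :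
    PartialIso.dMu μ g h.inv ≤
      PartialIso.dMu μ g (g.comp (h.comp g)) + PartialIso.dMu μ h (h.comp (g.comp h)) := by
  simp only [PartialIso.dMu_eq_toReal_edMu]
  rw [← ENNReal.toReal_add (PartialIso.edMu_ne_top μ _ _) (PartialIso.edMu_ne_top μ _ _)]
  exact ENNReal.toReal_mono
    (ENNReal.add_ne_top.2 ⟨PartialIso.edMu_ne_top μ _ _, PartialIso.edMu_ne_top μ _ _⟩)
    (PartialIso.edMu_inv_le hh)

/-- `d_μ(g, h⁻¹) ≤ d_μ(g, g∘h∘g) + d_μ(h, h∘g∘h)` for measure-preserving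
Borel partial isomorphisms. -/
theorem dMu_inv_le {X : Type*} [MeasurableSpace X] [StandardBorelSpace X]
    (μ : Measure X) [IsProbabilityMeasure μ] (g h : PartialIso X)
    (hg : PartialIso.MeasurePreservingOn μ g) (hh : PartialIso.MeasurePreservingOn μ h) :
    PartialIso.dMu μ g h.inv ≤
      PartialIso.dMu μ g (g.comp (h.comp g)) + PartialIso.dMu μ h (h.comp (g.comp h)) :=
  dMu_inv_le_general μ g h hh
end

section
/- Let (X,μ) be a standard probability space, g : X → X a Borel bijection with Borel inverse, A ⊆ X a Borel set and ε > 0. Then there exist N ∈ ℕ and a finite Borel partition {B_1, …, B_N, B_{N+1}} of A ∩ {x : g(x) ≠ x} such that μ(B_{N+1}) < ε and g(B_i) ∩ B_i = ∅ for all 1 ≤ i ≤ N. -/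
open MeasureTheory Set Function

/-!
A countable separating family of Borel sets, together with the complements, yields Borel sets
`W n` such that for `x ≠ y` some `W n` contains `x` but not `y`. Each `W n \ g⁻¹' W n` is
disjoint from its `g`-image, and together these sets cover the support of `g`. Disjointifying
their traces on `A` gives a countable Borel partition of `A ∩ supp g` into such sets; as `μ` is
finite, all but finitely many pieces have total measure `< ε`, and their union is `B_{N+1}`.
-/

theorem exists_seq_measurableSet_mem_and_notMem {X : Type*} [MeasurableSpace X]
    [HasCountableSeparatingOn X MeasurableSet univ] :
    ∃ W : ℕ → Set X, (∀ n, MeasurableSet (W n)) ∧ ∀ x y, x ≠ y → ∃ n, x ∈ W n ∧ y ∉ W n := by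
  obtain ⟨U, hUm, hUsep⟩ := exists_seq_separating X MeasurableSet.empty univ
  let W : ℕ ⊕ ℕ → Set X := Sum.elim U fun n => (U n)ᶜ
  refine ⟨fun n => W (Equiv.natSumNatEquivNat.symm n), fun n => ?_, fun x y hxy => ?_⟩
  · change MeasurableSet (W _)
    rcases Equiv.natSumNatEquivNat.symm n with k | k
    exacts [hUm k, (hUm k).compl]
  · obtain ⟨k, hk⟩ : ∃ k, ¬(x ∈ U k ↔ y ∈ U k) := by
      by_contra! h
      exact hxy (hUsep x (mem_univ x) y (mem_univ y) h)
    by_cases hx : x ∈ U k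
    · exact ⟨Equiv.natSumNatEquivNat (.inl k), by simp_all [W]⟩
    · exact ⟨Equiv.natSumNatEquivNat (.inr k), by simp_all [W]⟩

section FreeSets

variable {X : Type*} (g : X → X)

theorem disjoint_image_diff_preimage_self (s : Set X) :
    Disjoint (g '' (s \ g ⁻¹' s)) (s \ g ⁻¹' s) := by
  rw [disjoint_left]
  rintro _ ⟨x, hx, rfl⟩ hgx
  exact hx.2 hgx.1

theorem iUnion_diff_preimage_eq_support {W : ℕ → Set X}
    (hW : ∀ x y, x ≠ y → ∃ n, x ∈ W n ∧ y ∉ W n) :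
    ⋃ n, W n \ g ⁻¹' W n = {x | g x ≠ x} := by
  ext x
  simp only [mem_iUnion, Set.mem_sdiff, mem_preimage, mem_ofPred_eq]
  constructor
  · rintro ⟨n, hx, hgx⟩ hfix
    exact hgx (by rwa [hfix])
  · exact fun hgx => hW x (g x) (Ne.symm hgx)

end FreeSets

section CollapseTail

variable {X : Type*}

def collapseTail (C : ℕ → Set X) (N : ℕ) : Fin (N + 1) → Set X :=
  Fin.lastCases (⋃ n ≥ N, C n) fun i => C i

variable (C : ℕ → Set X) (N : ℕ)

@[simp]
theorem collapseTail_last : collapseTail C N (Fin.last N) = ⋃ n ≥ N, C n :=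
  Fin.lastCases_last

@[simp]
theorem collapseTail_castSucc (i : Fin N) : collapseTail C N i.castSucc = C i :=
  Fin.lastCases_castSucc i

theorem iUnion_collapseTail : ⋃ i, collapseTail C N i = ⋃ n, C n := by
  apply (iUnion_subset fun i => ?_).antisymm (iUnion_subset fun n => ?_)
  · rcases Fin.eq_castSucc_or_eq_last i with ⟨j, rfl⟩ | rfl
    · simpa using subset_iUnion C j
    · simpa using fun n _ => subset_iUnion C n
  · rcases lt_or_ge n N with hn | hn
    · exact (collapseTail_castSucc C N ⟨n, hn⟩).symm.subset.trans (subset_iUnion _ _)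
    · refine Subset.trans ?_ (subset_iUnion _ (Fin.last N))
      simpa using subset_iUnion₂ (s := fun n (_ : N ≤ n) => C n) n hn

theorem measurableSet_collapseTail [MeasurableSpace X] {C : ℕ → Set X}
    (hC : ∀ n, MeasurableSet (C n)) (i : Fin (N + 1)) : MeasurableSet (collapseTail C N i) := by
  rcases Fin.eq_castSucc_or_eq_last i with ⟨j, rfl⟩ | rfl
  · simpa using hC j
  · simpa using MeasurableSet.iUnion fun n => MeasurableSet.iUnion fun _ => hC n

theorem pairwise_disjoint_collapseTail {C : ℕ → Set X} (hC : Pairwise (Disjoint on C)) :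
    Pairwise (Disjoint on collapseTail C N) := by
  have head_tail (i : Fin N) : Disjoint (C i) (⋃ n ≥ N, C n) :=
    disjoint_iUnion₂_right.mpr fun n hn => hC (by omega)
  intro i j hij
  rcases Fin.eq_castSucc_or_eq_last i with ⟨i, rfl⟩ | rfl <;>
    rcases Fin.eq_castSucc_or_eq_last j with ⟨j, rfl⟩ | rfl
  all_goals simp only [onFun, collapseTail_castSucc, collapseTail_last]
  · exact hC (Fin.val_injective.ne (Fin.castSucc_injective N |>.ne_iff.mp hij))
  · exact head_tail i
  · exact (head_tail j).symm
  · exact absurd rfl hij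

end CollapseTail

/-- for a Borel bijection `g` (with Borel inverse) of a standard probability
space `(X,μ)`, a Borel set `A` and `ε > 0`, there is a finite Borel partition
`B_1, …, B_N, B_{N+1}` of `A ∩ supp g` with `μ(B_{N+1}) < ε` and `g(B_i) ∩ B_i = ∅`
for `1 ≤ i ≤ N`. -/
theorem exists_partition_support {X : Type*} [MeasurableSpace X] [StandardBorelSpace X]
    (μ : Measure X) [IsProbabilityMeasure μ] (g : X ≃ᵐ X)
    (A : Set X) (hA : MeasurableSet A) {ε : ℝ} (hε : 0 < ε) :
    ∃ (N : ℕ) (B : Fin (N + 1) → Set X),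
      (∀ i, MeasurableSet (B i)) ∧
      Pairwise (Function.onFun Disjoint B) ∧
      (⋃ i, B i) = A ∩ {x | g x ≠ x} ∧
      μ (B (Fin.last N)) < ENNReal.ofReal ε ∧
      ∀ i : Fin (N + 1), i ≠ Fin.last N → (⇑g) '' B i ∩ B i = ∅ := by
  obtain ⟨W, hWm, hWsep⟩ := exists_seq_measurableSet_mem_and_notMem (X := X)
  set V : ℕ → Set X := fun n => W n \ g ⁻¹' W n
  set C : ℕ → Set X := disjointed fun n => A ∩ V n
  have hCm : ∀ n, MeasurableSet (C n) :=
    .disjointed fun n => hA.inter ((hWm n).diff ((hWm n).preimage g.measurable))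
  have hCV (n : ℕ) : C n ⊆ V n := (disjointed_subset _ n).trans inter_subset_right
  have hCU : ⋃ n, C n = A ∩ {x | g x ≠ x} := by
    rw [iUnion_disjointed, ← inter_iUnion, iUnion_diff_preimage_eq_support g hWsep]
  obtain ⟨N, hN⟩ := ((tendsto_measure_biUnion_Ici_zero_of_pairwise_disjoint
    (μ := μ) (fun n => (hCm n).nullMeasurableSet) (disjoint_disjointed _)).eventually
      (gt_mem_nhds (ENNReal.ofReal_pos.mpr hε))).exists
  refine ⟨N, collapseTail C N, measurableSet_collapseTail N hCm,
    pairwise_disjoint_collapseTail N (disjoint_disjointed _), (iUnion_collapseTail C N).trans hCU,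
    by simpa using hN, fun i hi => ?_⟩
  obtain ⟨j, rfl⟩ := Fin.exists_castSucc_eq.mpr hi
  rw [collapseTail_castSucc, ← disjoint_iff_inter_eq_empty]
  exact (disjoint_image_diff_preimage_self g (W j)).mono (image_mono (hCV j)) (hCV j)
end

section
/- Let (X,μ) be a standard probability space, g : X → X a Borel bijection with Borel inverse, n ≥ 1, σ a permutation of [n] = {0,…,n−1}, and let φ be a map assigning to each Borel subset A ⊆ X a subset φ(A) ⊆ [n] such that: (i) #φ(A)/n = μ(A) for every Borel A; (ii) φ(A ∪ B) = φ(A) ∪ φ(B) for all disjoint Borel sets A, B; (iii) φ(g(A)) = σ(φ(A)) for every Borel A. Then for every Borel A ⊆ X, #{i ∈ φ(A) : σ(i) = i}/n ≤ μ({x ∈ A : g(x) = x}). Moreover, if in addition #{i : σ(i) = i}/n = μ({x : g(x) = x}), then equality #{i ∈ φ(A) : σ(i) = i}/n = μ({x ∈ A : g(x) = x}) holds for every Borel A. -/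
/-!
Every index `i` that lies in some `φ A` behaves like a Dirac mass. The Borel sets `A` with
`i ∈ φ A` are closed under finite intersections (disjoint sets have disjoint images, by
counting), and even under countable ones, because `#φ A = n μ A` forces `φ A = ∅` as soon as
`μ A < 1 / n`. Refining along a countable separating family of Borel sets therefore yields a
point `xᵢ` with `i ∈ φ A ↔ xᵢ ∈ A` for every Borel `A`. Covariance says that `g⁻¹ xᵢ`
represents `σ⁻¹ i`; hence if `σ i = i` then `g xᵢ = xᵢ`, and every `σ`-fixed `i ∈ φ A` already
lies in `φ {x ∈ A | g x = x}`. For the equality case, add the inequalities for `A` and `Aᶜ`.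
-/

open MeasureTheory Set Filter Topology
open scoped ENNReal

/-- Conditions (i) and (ii) of the statement, with (i) multiplied by `n` to avoid dividing. -/
structure IsFinitaryModel {X ι : Type*} [MeasurableSpace X] [DecidableEq ι] (μ : Measure X)
    (n : ℕ) (φ : Set X → Finset ι) : Prop where
  card_eq : ∀ A, MeasurableSet A → ((φ A).card : ℝ) = n * (μ A).toReal
  union_eq : ∀ A B, MeasurableSet A → MeasurableSet B → Disjoint A B → φ (A ∪ B) = φ A ∪ φ B

namespace IsFinitaryModel

variable {X ι : Type*} [MeasurableSpace X] [DecidableEq ι] {μ : Measure X} {n : ℕ}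
  {φ : Set X → Finset ι} {A B : Set X} {i : ι}

theorem eq_union_diff (hφ : IsFinitaryModel μ n φ) (hA : MeasurableSet A) (hB : MeasurableSet B)
    (hAB : A ⊆ B) : φ B = φ A ∪ φ (B \ A) := by
  rw [← hφ.union_eq A (B \ A) hA (hB.diff hA) disjoint_sdiff_right, union_sdiff_cancel hAB]

theorem mono (hφ : IsFinitaryModel μ n φ) (hA : MeasurableSet A) (hB : MeasurableSet B)
    (hAB : A ⊆ B) : φ A ⊆ φ B :=
  (hφ.eq_union_diff hA hB hAB).symm ▸ Finset.subset_union_left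

theorem empty_eq (hφ : IsFinitaryModel μ n φ) : φ ∅ = ∅ := by
  simpa using hφ.card_eq ∅ MeasurableSet.empty

theorem disjoint [IsFiniteMeasure μ] (hφ : IsFinitaryModel μ n φ) (hA : MeasurableSet A)
    (hB : MeasurableSet B) (hAB : Disjoint A B) : Disjoint (φ A) (φ B) := by
  rw [← Finset.card_union_eq_card_add_card, ← hφ.union_eq A B hA hB hAB]
  have := hφ.card_eq _ (hA.union hB)
  rw [measure_union hAB hB, ENNReal.toReal_add (measure_ne_top μ A) (measure_ne_top μ B),
    mul_add, ← hφ.card_eq A hA, ← hφ.card_eq B hB] at this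
  exact_mod_cast this

theorem eq_empty_of_mul_lt_one [IsFiniteMeasure μ] (hφ : IsFinitaryModel μ n φ)
    (hA : MeasurableSet A) (h : n * μ A < 1) : φ A = ∅ := by
  have hlt : ((φ A).card : ℝ) < 1 := by
    rw [hφ.card_eq A hA, ← ENNReal.toReal_natCast, ← ENNReal.toReal_mul]
    exact ENNReal.toReal_lt_of_lt_ofReal (by simpa using h)
  exact Finset.card_eq_zero.1 (Nat.lt_one_iff.1 (by exact_mod_cast hlt))

theorem mem_inter [IsFiniteMeasure μ] (hφ : IsFinitaryModel μ n φ) (hA : MeasurableSet A)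
    (hB : MeasurableSet B) (hiA : i ∈ φ A) (hiB : i ∈ φ B) : i ∈ φ (A ∩ B) := by
  rw [hφ.eq_union_diff (hA.inter hB) hA inter_subset_left, sdiff_self_inter] at hiA
  refine (Finset.mem_union.1 hiA).resolve_right fun hi => ?_
  exact Finset.disjoint_left.1 (hφ.disjoint (hA.diff hB) hB disjoint_sdiff_left) hi hiB

theorem mem_iInter_of_antitone [IsFiniteMeasure μ] (hφ : IsFinitaryModel μ n φ)
    {A : ℕ → Set X} (hA : ∀ k, MeasurableSet (A k)) (hanti : Antitone A)
    (hi : ∀ k, i ∈ φ (A k)) : i ∈ φ (⋂ k, A k) := by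
  have hK : MeasurableSet (⋂ k, A k) := MeasurableSet.iInter hA
  have hlim : Tendsto (fun k => (n : ℝ≥0∞) * μ (A k \ ⋂ k, A k)) atTop (𝓝 0) := by
    have := tendsto_measure_iInter_atTop (μ := μ) (fun k => ((hA k).diff hK).nullMeasurableSet)
      (fun j k hjk => sdiff_subset_sdiff_left (hanti hjk)) ⟨0, measure_ne_top μ _⟩
    have hempty : ⋂ k, (A k \ ⋂ k, A k) = ∅ := eq_empty_of_forall_notMem fun x hx =>
      (mem_iInter.1 hx 0).2 (mem_iInter.2 fun k => (mem_iInter.1 hx k).1)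
    rw [hempty, measure_empty] at this
    simpa using ENNReal.Tendsto.const_mul this (Or.inr (ENNReal.natCast_ne_top n))
  obtain ⟨k, hk⟩ := (hlim.eventually (gt_mem_nhds zero_lt_one)).exists
  have hi := hi k
  rwa [hφ.eq_union_diff hK (hA k) (iInter_subset A k),
    hφ.eq_empty_of_mul_lt_one ((hA k).diff hK) hk, Finset.union_empty] at hi

theorem mem_iInter [IsFiniteMeasure μ] (hφ : IsFinitaryModel μ n φ) {A : ℕ → Set X}
    (hA : ∀ k, MeasurableSet (A k)) (hi : ∀ k, i ∈ φ (A k)) : i ∈ φ (⋂ k, A k) := by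
  have hD : ∀ k, MeasurableSet (dissipate A k) := fun k =>
    MeasurableSet.biInter (to_countable _) fun j _ => hA j
  have hiD : ∀ k, i ∈ φ (dissipate A k) := by
    intro k
    induction k with
    | zero => simpa using hi 0
    | succ k ih => simpa using hφ.mem_inter (hD k) (hA (k + 1)) ih (hi (k + 1))
  simpa using hφ.mem_iInter_of_antitone hD antitone_dissipate hiD

theorem exists_forall_mem_iff [IsFiniteMeasure μ] [MeasurableSpace.CountablySeparated X]
    (hφ : IsFinitaryModel μ n φ) (hA : MeasurableSet A) (hi : i ∈ φ A) :
    ∃ x, ∀ B, MeasurableSet B → (i ∈ φ B ↔ x ∈ B) := by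
  obtain ⟨S, hSm, hSsep⟩ := exists_seq_separating X MeasurableSet.empty univ
  let T : ℕ → Set X := fun k => if i ∈ φ (A ∩ S k) then A ∩ S k else A \ S k
  have hTm : ∀ k, MeasurableSet (T k) := fun k => by
    by_cases h : i ∈ φ (A ∩ S k) <;> simp only [T, h, if_true, if_false]
    exacts [hA.inter (hSm k), hA.diff (hSm k)]
  have hiT : ∀ k, i ∈ φ (T k) := fun k => by
    have hsplit := hφ.eq_union_diff (hA.inter (hSm k)) hA inter_subset_left
    rw [sdiff_self_inter] at hsplit
    by_cases h : i ∈ φ (A ∩ S k) <;> simp only [T, h, if_true, if_false]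
    exact (Finset.mem_union.1 (hsplit ▸ hi)).resolve_left h
  have hK := MeasurableSet.iInter hTm
  have hiK : i ∈ φ (⋂ k, T k) := hφ.mem_iInter hTm hiT
  obtain ⟨x, hx⟩ : (⋂ k, T k).Nonempty :=
    nonempty_iff_ne_empty.2 fun h => by simp [h, hφ.empty_eq] at hiK
  have hKx : (⋂ k, T k) ⊆ {x} := fun y hy => hSsep y trivial x trivial fun k => by
    have hyk := Set.mem_iInter.1 hy k
    have hxk := Set.mem_iInter.1 hx k
    by_cases h : i ∈ φ (A ∩ S k) <;> simp only [T, h, if_true, if_false] at hyk hxk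
    exacts [iff_of_true hyk.2 hxk.2, iff_of_false hyk.2 hxk.2]
  refine ⟨x, fun B hB => ⟨fun hiB => ?_, fun hxB => ?_⟩⟩
  · by_contra hxB
    have hdisj : Disjoint (⋂ k, T k) B :=
      disjoint_singleton_left.2 hxB |>.mono_left hKx
    exact Finset.disjoint_left.1 (hφ.disjoint hK hB hdisj) hiK hiB
  · exact hφ.mono hK hB (hKx.trans (singleton_subset_iff.2 hxB)) hiK

theorem mem_sep_fixed_of_covariant [IsFiniteMeasure μ] [MeasurableSpace.CountablySeparated X]
    [MeasurableEq X] (hφ : IsFinitaryModel μ n φ) (g : X ≃ᵐ X) (σ : Equiv.Perm ι)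
    (hcov : ∀ A, MeasurableSet A → φ (g '' A) = (φ A).image σ) (hA : MeasurableSet A)
    (hi : i ∈ φ A) (hσi : σ i = i) : i ∈ φ {x ∈ A | g x = x} := by
  obtain ⟨x, hx⟩ := hφ.exists_forall_mem_iff hA hi
  have hgx : x = g.symm x := MeasurableSpace.separatesPoints_def fun B hB hxB => by
    rwa [← mem_preimage, ← g.image_eq_preimage_symm, ← hx _ (g.measurableSet_image.2 hB),
      hcov B hB, ← hσi, σ.injective.mem_finset_image, hx B hB]
  have hfix : MeasurableSet {x | g x = x} := measurableSet_eq_fun g.measurable measurable_id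
  refine (hx _ (hA.inter hfix)).2 ⟨(hx A hA).1 hi, ?_⟩
  exact (g.symm_apply_eq.1 hgx.symm).symm

theorem card_filter_fixed_le_of_covariant [IsFiniteMeasure μ]
    [MeasurableSpace.CountablySeparated X] [MeasurableEq X] (hφ : IsFinitaryModel μ n φ)
    (g : X ≃ᵐ X) (σ : Equiv.Perm ι) (hcov : ∀ A, MeasurableSet A → φ (g '' A) = (φ A).image σ)
    (hA : MeasurableSet A) :
    (((φ A).filter fun i => σ i = i).card : ℝ) ≤ n * (μ {x ∈ A | g x = x}).toReal := by
  have hfix : MeasurableSet {x | g x = x} := measurableSet_eq_fun g.measurable measurable_id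
  rw [← hφ.card_eq {x ∈ A | g x = x} (hA.inter hfix)]
  exact_mod_cast Finset.card_le_card fun i hi => by
    rw [Finset.mem_filter] at hi
    exact hφ.mem_sep_fixed_of_covariant g σ hcov hA hi.1 hi.2

theorem card_filter_add_card_filter_compl [IsFiniteMeasure μ] (hφ : IsFinitaryModel μ n φ)
    (hA : MeasurableSet A) (p : ι → Prop) [DecidablePred p] :
    ((φ A).filter p).card + ((φ Aᶜ).filter p).card = ((φ univ).filter p).card := by
  rw [← Finset.card_union_of_disjoint ((hφ.disjoint hA hA.compl disjoint_compl_right).mono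
    (Finset.filter_subset _ _) (Finset.filter_subset _ _)), ← Finset.filter_union,
    ← hφ.union_eq A Aᶜ hA hA.compl disjoint_compl_right, union_compl_self]

theorem univ_eq [IsProbabilityMeasure μ] {φ : Set X → Finset (Fin n)}
    (hφ : IsFinitaryModel μ n φ) : φ univ = Finset.univ :=
  Finset.eq_univ_of_card _ <| by simpa using hφ.card_eq univ MeasurableSet.univ

theorem card_filter_fixed_eq_of_covariant [IsProbabilityMeasure μ]
    [MeasurableSpace.CountablySeparated X] [MeasurableEq X] {φ : Set X → Finset (Fin n)}
    (hφ : IsFinitaryModel μ n φ) (g : X ≃ᵐ X) (σ : Equiv.Perm (Fin n))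
    (hcov : ∀ A, MeasurableSet A → φ (g '' A) = (φ A).image σ)
    (htr : ((Finset.univ.filter fun i => σ i = i).card : ℝ) = n * (μ {x | g x = x}).toReal)
    (hA : MeasurableSet A) :
    (((φ A).filter fun i => σ i = i).card : ℝ) = n * (μ {x ∈ A | g x = x}).toReal := by
  have hcard := hφ.card_filter_add_card_filter_compl hA fun i => σ i = i
  rw [hφ.univ_eq] at hcard
  have hfix : MeasurableSet {x | g x = x} := measurableSet_eq_fun g.measurable measurable_id
  have hsplit : μ {x | g x = x} = μ {x ∈ A | g x = x} + μ {x ∈ Aᶜ | g x = x} :=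
    calc μ {x | g x = x} = μ ({x ∈ A | g x = x} ∪ {x ∈ Aᶜ | g x = x}) := by
          congr 1; ext x; by_cases x ∈ A <;> simp [*]
      _ = _ := measure_union (disjoint_compl_right.mono (sep_subset _ _) (sep_subset _ _))
          (hA.compl.inter hfix)
  rw [← hcard, hsplit, ENNReal.toReal_add (measure_ne_top _ _) (measure_ne_top _ _)] at htr
  push_cast at htr
  linarith [hφ.card_filter_fixed_le_of_covariant g σ hcov hA,
    hφ.card_filter_fixed_le_of_covariant g σ hcov hA.compl]

end IsFinitaryModel

/-- finitary covariance lemma. If `φ` sends Borel subsets of `(X,μ)` to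
subsets of `[n]` preserving normalized measure and disjoint unions, and intertwines a
Borel bijection `g` with a permutation `σ`, then `#{i ∈ φ(A) : σ i = i}/n ≤
μ{x ∈ A : g x = x}` for every Borel `A`; and if moreover `tr σ = tr g`, equality holds. -/
theorem fixedPoints_le_of_covariant {X : Type*} [MeasurableSpace X] [StandardBorelSpace X]
    (μ : Measure X) [IsProbabilityMeasure μ] (g : X ≃ᵐ X)
    (n : ℕ) (hn : 1 ≤ n) (σ : Equiv.Perm (Fin n)) (φ : Set X → Finset (Fin n))
    (hmeas : ∀ A : Set X, MeasurableSet A → ((φ A).card : ℝ) / n = (μ A).toReal)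
    (hunion : ∀ A B : Set X, MeasurableSet A → MeasurableSet B → Disjoint A B →
      φ (A ∪ B) = φ A ∪ φ B)
    (hcov : ∀ A : Set X, MeasurableSet A → φ ((⇑g) '' A) = (φ A).image σ) :
    (∀ A : Set X, MeasurableSet A →
      (((φ A).filter fun i => σ i = i).card : ℝ) / n ≤ (μ {x ∈ A | g x = x}).toReal) ∧
    ((((Finset.univ.filter fun i => σ i = i).card : ℝ) / n = (μ {x | g x = x}).toReal) →
      ∀ A : Set X, MeasurableSet A →
        (((φ A).filter fun i => σ i = i).card : ℝ) / n = (μ {x ∈ A | g x = x}).toReal) := by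
  have hn0 : (0 : ℝ) < n := Nat.cast_pos.2 hn
  have hφ : IsFinitaryModel μ n φ :=
    ⟨fun A hA => by rw [← hmeas A hA, mul_div_cancel₀ _ hn0.ne'], hunion⟩
  refine ⟨fun A hA => (div_le_iff₀' hn0).2 (hφ.card_filter_fixed_le_of_covariant g σ hcov hA),
    fun htr A hA => ?_⟩
  rw [div_eq_iff hn0.ne', mul_comm] at htr ⊢
  exact hφ.card_filter_fixed_eq_of_covariant g σ hcov htr hA
end

section
/- Let (X,μ) be a standard probability space, g : X → X a Borel bijection with Borel inverse, n ≥ 1, σ a permutation of [n] = {0,…,n−1}, and let φ be a map assigning to each Borel subset A ⊆ X a subset φ(A) ⊆ [n] such that: (i) #φ(A)/n = μ(A) for every Borel A; (ii) φ(A ∪ B) = φ(A) ∪ φ(B) for all disjoint Borel sets A, B; (iii) φ(g(A)) = σ(φ(A)) for every Borel A; and assume #{i : σ(i) = i}/n = μ({x : g(x) = x}). If A ⊆ X is a Borel set with g(x) = x for all x ∈ A, then σ(i) = i for all i ∈ φ(A). -/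
open MeasureTheory Set Filter
open scoped ENNReal Topology

/-!
The points of `X` moved by `g` are covered by countably many Borel pieces `t \ g⁻¹' t`, each
disjoint from its image under `g`; by covariance `φ` sends such a piece to a set of indices
disjoint from its image under `σ`, so containing no fixed point of `σ`. Although `φ` is only
finitely additive, a set of measure `< 1 / n` is sent to `∅`, so `φ` of a countable union is
`φ` of a finite subunion. Hence `φ {x | g x ≠ x}` avoids the fixed points of `σ`, and since
`φ univ = univ` they all lie in `φ {x | g x = x}`. The trace condition says that these two sets
of indices have the same size, so they are equal, and `φ` is monotone.
-/

/-- `t (k, b)` is the set where bit `k` of a measurable injection into `ℕ → Bool` equals `b`. -/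
theorem exists_iUnion_diff_preimage_eq_setOf_ne {X : Type*} [MeasurableSpace X]
    [MeasurableSpace.CountablySeparated X] (f : X → X) :
    ∃ t : ℕ × Bool → Set X, (∀ k, MeasurableSet (t k)) ∧
      ⋃ k, t k \ f ⁻¹' t k = {x | f x ≠ x} := by
  obtain ⟨c, hc, hinj⟩ := MeasurableSpace.measurable_injection_nat_bool_of_countablySeparated X
  refine ⟨fun k => {x | c x k.1 = k.2}, fun k => (measurable_pi_apply k.1).comp hc
    (measurableSet_singleton k.2), ?_⟩
  ext x
  simp only [mem_iUnion, Set.mem_sdiff, mem_preimage, mem_ofPred_eq, Prod.exists,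
    exists_eq_left']
  refine ⟨fun ⟨k, hk⟩ hfx => hk (by rw [hfx]), fun hfx => ?_⟩
  obtain ⟨k, hk⟩ := Function.ne_iff.1 fun h => hfx (hinj h)
  exact ⟨k, hk⟩

structure IsFinsetModel {X α : Type*} [MeasurableSpace X] [DecidableEq α] (μ : Measure X)
    (n : ℕ) (φ : Set X → Finset α) : Prop where
  card_div : ∀ A : Set X, MeasurableSet A → ((φ A).card : ℝ) / n = (μ A).toReal
  union_of_disjoint : ∀ A B : Set X, MeasurableSet A → MeasurableSet B → Disjoint A B →
    φ (A ∪ B) = φ A ∪ φ B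

namespace IsFinsetModel

variable {X α : Type*} [MeasurableSpace X] [DecidableEq α] {μ : Measure X} {n : ℕ}
  {φ : Set X → Finset α} {A B : Set X}

theorem card_eq (hφ : IsFinsetModel μ n φ) (hn : 0 < n) (hA : MeasurableSet A) :
    ((φ A).card : ℝ) = n * (μ A).toReal := by
  rw [← hφ.card_div A hA, mul_div_cancel₀ _ (by positivity)]

theorem mono (hφ : IsFinsetModel μ n φ) (hA : MeasurableSet A) (hB : MeasurableSet B)
    (hAB : A ⊆ B) : φ A ⊆ φ B := by
  rw [← union_sdiff_cancel hAB,
    hφ.union_of_disjoint A (B \ A) hA (hB.diff hA) disjoint_sdiff_right]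
  exact Finset.subset_union_left

theorem map_union (hφ : IsFinsetModel μ n φ) (hA : MeasurableSet A) (hB : MeasurableSet B) :
    φ (A ∪ B) = φ A ∪ φ B := by
  refine subset_antisymm ?_ (Finset.union_subset (hφ.mono hA (hA.union hB) subset_union_left)
    (hφ.mono hB (hA.union hB) subset_union_right))
  rw [← union_sdiff_self, hφ.union_of_disjoint A (B \ A) hA (hB.diff hA) disjoint_sdiff_right]
  exact Finset.union_subset_union_right (hφ.mono (hB.diff hA) hB sdiff_subset)

theorem eq_empty_of_measure_lt (hφ : IsFinsetModel μ n φ) (hn : 0 < n) (hA : MeasurableSet A)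
    (hμA : μ A < (n : ℝ≥0∞)⁻¹) : φ A = ∅ := by
  have hn' : (0 : ℝ) < n := by exact_mod_cast hn
  have hμA' : (μ A).toReal < (n : ℝ)⁻¹ := by
    rwa [← ENNReal.toReal_natCast, ← ENNReal.toReal_inv,
      ENNReal.toReal_lt_toReal hμA.ne_top (ENNReal.inv_ne_top.2 (by exact_mod_cast hn.ne'))]
  have hcard : ((φ A).card : ℝ) < 1 := by
    rw [hφ.card_eq hn hA, ← mul_inv_cancel₀ hn'.ne']
    exact mul_lt_mul_of_pos_left hμA' hn'
  exact Finset.card_eq_zero.1 (Nat.lt_one_iff.1 (by exact_mod_cast hcard))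

theorem map_biUnion_finset {ι : Type*} (hφ : IsFinsetModel μ n φ) (hn : 0 < n)
    {A : ι → Set X} (hA : ∀ i, MeasurableSet (A i)) (s : Finset ι) :
    φ (⋃ i ∈ s, A i) = s.biUnion fun i => φ (A i) := by
  classical
  induction s using Finset.induction_on with
  | empty => simpa using hφ.eq_empty_of_measure_lt hn .empty (by simp)
  | insert a s _ ih =>
    rw [Finset.set_biUnion_insert, hφ.map_union (hA a) (s.measurableSet_biUnion fun i _ => hA i),
      ih, Finset.biUnion_insert]

theorem disjoint_map [IsFiniteMeasure μ] (hφ : IsFinsetModel μ n φ) (hn : 0 < n)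
    (hA : MeasurableSet A) (hB : MeasurableSet B) (hAB : Disjoint A B) :
    Disjoint (φ A) (φ B) := by
  rw [← Finset.card_union_eq_card_add_card, ← hφ.union_of_disjoint A B hA hB hAB]
  have hcard : ((φ (A ∪ B)).card : ℝ) = (φ A).card + (φ B).card := by
    rw [hφ.card_eq hn (hA.union hB), hφ.card_eq hn hA, hφ.card_eq hn hB, measure_union hAB hB,
      ENNReal.toReal_add (measure_ne_top μ A) (measure_ne_top μ B), mul_add]
  exact_mod_cast hcard

/-- The tail of the union has measure `< 1 / n`, so `φ` sends it to `∅`. -/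
theorem exists_finset_map_iUnion_eq [IsFiniteMeasure μ] {ι : Type*} [Countable ι]
    (hφ : IsFinsetModel μ n φ) (hn : 0 < n) {A : ι → Set X} (hA : ∀ i, MeasurableSet (A i)) :
    ∃ s : Finset ι, φ (⋃ i, A i) = s.biUnion fun i => φ (A i) := by
  have hW (s : Finset ι) : MeasurableSet (⋃ i ∈ s, A i) :=
    s.measurableSet_biUnion fun i _ => hA i
  have hrest : Tendsto (fun s : Finset ι => μ ((⋃ i, A i) \ ⋃ i ∈ s, A i)) atTop (𝓝 0) := by
    have hlim := tendsto_measure_iInter_atTop (μ := μ)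
      (fun s => ((MeasurableSet.iUnion hA).diff (hW s)).nullMeasurableSet)
      (fun s t hst => sdiff_subset_sdiff_right (biUnion_subset_biUnion_left hst))
      ⟨∅, measure_ne_top μ _⟩
    have hempty : ⋂ s : Finset ι, (⋃ i, A i) \ ⋃ i ∈ s, A i = ∅ := by
      refine eq_empty_of_forall_notMem fun x hx => ?_
      obtain ⟨i, hi⟩ := mem_iUnion.1 (mem_iInter.1 hx ∅).1
      exact (mem_iInter.1 hx {i}).2 (by simpa using hi)
    rwa [hempty, measure_empty] at hlim
  obtain ⟨s, hs⟩ :=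
    (hrest.eventually (gt_mem_nhds (ENNReal.inv_pos.2 (ENNReal.natCast_ne_top n)))).exists
  refine ⟨s, ?_⟩
  rw [← union_sdiff_cancel (iUnion₂_subset fun i _ => subset_iUnion A i),
    hφ.map_union (hW s) ((MeasurableSet.iUnion hA).diff (hW s)),
    hφ.eq_empty_of_measure_lt hn ((MeasurableSet.iUnion hA).diff (hW s)) hs, Finset.union_empty,
    hφ.map_biUnion_finset hn hA]

theorem apply_ne_of_disjoint_image [IsFiniteMeasure μ] (hφ : IsFinsetModel μ n φ) (hn : 0 < n)
    {g : X ≃ᵐ X} {σ : Equiv.Perm α} (hB : MeasurableSet B)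
    (hcov : φ (g '' B) = (φ B).image σ) (hgB : Disjoint (g '' B) B) {i : α} (hi : i ∈ φ B) :
    σ i ≠ i := by
  intro hσi
  have hdisj := hφ.disjoint_map hn (g.measurableSet_image.2 hB) hB hgB
  rw [hcov] at hdisj
  exact Finset.disjoint_left.1 hdisj (Finset.mem_image.2 ⟨i, hi, hσi⟩) hi

theorem apply_ne_of_mem_map_setOf_ne [MeasurableSpace.CountablySeparated X]
    [IsFiniteMeasure μ] (hφ : IsFinsetModel μ n φ) (hn : 0 < n) {g : X ≃ᵐ X} {σ : Equiv.Perm α}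
    (hcov : ∀ A : Set X, MeasurableSet A → φ (g '' A) = (φ A).image σ) :
    ∀ i ∈ φ {x | g x ≠ x}, σ i ≠ i := by
  obtain ⟨t, ht, hU⟩ := exists_iUnion_diff_preimage_eq_setOf_ne g
  have hpiece (k) : MeasurableSet (t k \ g ⁻¹' t k) := (ht k).diff (g.measurable (ht k))
  obtain ⟨s, hs⟩ := hφ.exists_finset_map_iUnion_eq hn hpiece
  rw [← hU, hs]
  intro i hi
  obtain ⟨k, -, hik⟩ := Finset.mem_biUnion.1 hi
  refine hφ.apply_ne_of_disjoint_image hn (hpiece k) (hcov _ (hpiece k)) ?_ hik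
  rw [Set.disjoint_left]
  rintro _ ⟨x, ⟨-, hgx⟩, rfl⟩ hgx'
  exact hgx hgx'.1

end IsFinsetModel

/-- if `φ` sends Borel subsets of `(X,μ)` to subsets of `[n]` preserving
normalized measure and disjoint unions, intertwines a Borel bijection `g` with a
permutation `σ`, and `σ` has the same trace as `g`, then `φ` sends any Borel set of
fixed points of `g` into the fixed points of `σ`. -/
theorem mem_fixedPoints_of_covariant {X : Type*} [MeasurableSpace X] [StandardBorelSpace X]
    (μ : Measure X) [IsProbabilityMeasure μ] (g : X ≃ᵐ X)
    (n : ℕ) (hn : 1 ≤ n) (σ : Equiv.Perm (Fin n)) (φ : Set X → Finset (Fin n))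
    (hmeas : ∀ A : Set X, MeasurableSet A → ((φ A).card : ℝ) / n = (μ A).toReal)
    (hunion : ∀ A B : Set X, MeasurableSet A → MeasurableSet B → Disjoint A B →
      φ (A ∪ B) = φ A ∪ φ B)
    (hcov : ∀ A : Set X, MeasurableSet A → φ ((⇑g) '' A) = (φ A).image σ)
    (htr : ((Finset.univ.filter fun i => σ i = i).card : ℝ) / n = (μ {x | g x = x}).toReal)
    (A : Set X) (hA : MeasurableSet A) (hfix : ∀ x ∈ A, g x = x) :
    ∀ i ∈ φ A, σ i = i := by
  have hφ : IsFinsetModel μ n φ := ⟨hmeas, hunion⟩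
  have hF : MeasurableSet {x | g x = x} := measurableSet_eq_fun g.measurable measurable_id
  have hmoved := hφ.apply_ne_of_mem_map_setOf_ne hn hcov
  have huniv : φ univ = Finset.univ :=
    Finset.eq_univ_of_card _ (by simpa using hφ.card_eq hn .univ)
  have hsub : Finset.univ.filter (fun i => σ i = i) ⊆ φ {x | g x = x} := by
    intro i hi
    have hi' : i ∈ φ ({x | g x = x} ∪ {x | g x = x}ᶜ) := by simp [huniv]
    rw [hφ.map_union hF hF.compl] at hi'
    exact (Finset.mem_union.1 hi').resolve_right fun h => hmoved i h (Finset.mem_filter.1 hi).2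
  have hcard : (Finset.univ.filter fun i => σ i = i).card = (φ {x | g x = x}).card := by
    exact_mod_cast (div_left_inj' (by positivity)).1 (htr.trans (hmeas _ hF).symm)
  have heq := Finset.eq_of_subset_of_card_le hsub hcard.ge
  intro i hi
  have hi' := hφ.mono hA hF hfix hi
  rw [← heq] at hi'
  exact (Finset.mem_filter.1 hi').2
end

section
/- Let X be a standard Borel space, μ a Borel probability measure on X, and R ⊆ X × X a countable Borel equivalence relation (R is a Borel subset of X × X, is an equivalence relation, and every class R(x) = {y : (x,y) ∈ R} is countable). Then there exists a Borel bijection α : X → X with Borel inverse such that (x, α(x)) ∈ R for all x ∈ X and, up to a μ-null set, {x : α(x) ≠ x} = Per_{≥2}(R) := {x ∈ X : R(x) has at least two elements}. -/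
open MeasureTheory Set

/-!
Call a measurable involution whose graph lies in `R` admissible. A greedy exhaustion yields an
admissible `ι` whose support `T` is maximal up to null sets. Maximality forces almost every point
outside `T` to have no `R`-partner outside `T`: otherwise a measurable selection of partners
(compact approximation of analytic projections plus an infimum selector), made injective on a
set of positive measure by disintegrating `μ` along it, and made fixed-point free on a smaller
such set by separating points with countably many Borel sets, would produce an admissible
involution supported off `T` with positive measure. The remaining points `Λ` of `Per_{≥2}(R)`
outside `T` get a measurable partner `j x ∈ T`; this is injective because two points of `Λ` are
never `R`-related. With `τ` the involution swapping `Λ` and `j '' Λ`, the automorphism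
`α = ι ∘ τ` has its graph in `R` and moves every point of `T ∪ Λ`, which is almost all of
`Per_{≥2}(R)`.
-/

open Filter Function Topology ProbabilityTheory
open scoped ENNReal

section Capacity

variable {β : Type*}

theorem iInter_closure_image_pi_Iio_subset [TopologicalSpace β] [FirstCountableTopology β]
    [T2Space β] {g : (ℕ → ℕ) → β} (hg : Continuous g) (v : ℕ → ℕ) :
    ⋂ n, closure (g '' (Iio n).pi fun i => Iic (v i)) ⊆ g '' univ.pi fun i => Iic (v i) := by
  intro x hx
  obtain ⟨U, hU⟩ := (𝓝 x).exists_antitone_basis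
  have hz : ∀ n, ∃ z ∈ (Iio n).pi fun i => Iic (v i), g z ∈ U n := fun n => by
    obtain ⟨_, hxU, z, hz, rfl⟩ := mem_closure_iff_nhds.1 (mem_iInter.1 hx n) (U n) (hU.mem n)
    exact ⟨z, hz, hxU⟩
  choose z hzbox hzU using hz
  -- truncating `z n` at `v` only changes coordinates `≥ n`
  have hK : ∀ n, (fun i => min (z n i) (v i)) ∈ univ.pi fun i => Iic (v i) :=
    fun n i _ => mem_Iic.2 (min_le_right _ _)
  obtain ⟨w, hw, φ, hφ, hlim⟩ :=
    (isCompact_univ_pi fun i => (finite_Iic _).isCompact).isSeqCompact hK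
  have hzw : Tendsto (fun j => z (φ j)) atTop (𝓝 w) := by
    refine tendsto_pi_nhds.2 fun i => (tendsto_pi_nhds.1 hlim i).congr' ?_
    filter_upwards [eventually_gt_atTop i] with j hj
    exact min_eq_left (hzbox (φ j) i (lt_of_lt_of_le hj hφ.le_apply))
  refine ⟨w, hw, tendsto_nhds_unique ((hg.tendsto w).comp hzw) ?_⟩
  exact (hU.tendsto hzU).comp hφ.tendsto_atTop

variable [MeasurableSpace β] (μ : Measure β) [IsFiniteMeasure μ]

theorem exists_measure_image_le_inter_add (g : (ℕ → ℕ) → β) (S : Set (ℕ → ℕ)) (n : ℕ)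
    {δ : ℝ≥0∞} (hδ : δ ≠ 0) : ∃ m, μ (g '' S) ≤ μ (g '' (S ∩ {z | z n ≤ m})) + δ := by
  have hmono : Monotone fun m => g '' (S ∩ {z | z n ≤ m}) := fun a b hab =>
    image_mono (inter_subset_inter_right _ fun z hz => le_trans hz hab)
  have hunion : ⋃ m, g '' (S ∩ {z | z n ≤ m}) = g '' S := by
    rw [← image_iUnion, ← inter_iUnion, iUnion_eq_univ_iff.2 fun z => ⟨z n, le_refl (z n)⟩,
      inter_univ]
  have hlt : μ (g '' S) < ⨆ m, (μ (g '' (S ∩ {z | z n ≤ m})) + δ) := by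
    rw [← ENNReal.iSup_add, ← hmono.measure_iUnion, hunion]
    exact ENNReal.lt_add_right (measure_ne_top μ _) hδ
  obtain ⟨m, hm⟩ := lt_iSup_iff.1 hlt
  exact ⟨m, hm.le⟩

theorem exists_measure_range_le_image_pi_Iio (g : (ℕ → ℕ) → β) {ε : ℝ≥0∞} (hε : ε ≠ 0) :
    ∃ v : ℕ → ℕ, ∀ n, μ (range g) ≤ μ (g '' (Iio n).pi fun i => Iic (v i)) + ε := by
  obtain ⟨δ, hδpos, hδsum⟩ := ENNReal.exists_pos_sum_of_countable hε ℕ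
  choose m hm using fun S n =>
    exists_measure_image_le_inter_add μ g S n (ENNReal.coe_ne_zero.2 (hδpos n).ne')
  let S : ℕ → Set (ℕ → ℕ) := fun n => Nat.rec univ (fun k S => S ∩ {z | z k ≤ m S k}) n
  obtain ⟨v, hv⟩ : ∃ v : ℕ → ℕ, v = fun n => m (S n) n := ⟨_, rfl⟩
  have hS : ∀ n, S n = (Iio n).pi fun i => Iic (v i) := by
    intro n
    induction n with
    | zero => simp [S]
    | succ n ih =>
      rw [show S (n + 1) = S n ∩ {z | z n ≤ v n} by rw [hv], ih]
      ext z
      simp only [mem_inter_iff, Set.mem_pi, mem_Iio, mem_Iic,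
        Nat.forall_lt_succ_right]
      rfl
  have hsum : ∀ n, μ (range g) ≤ μ (g '' S n) + ∑ i ∈ Finset.range n, (δ i : ℝ≥0∞) := by
    intro n
    induction n with
    | zero => simp [S]
    | succ n ih =>
      rw [Finset.sum_range_succ, add_comm _ (δ n : ℝ≥0∞), ← add_assoc]
      refine ih.trans (add_le_add_left ?_ _)
      simpa only [hv] using hm (S n) n
  refine ⟨v, fun n => ?_⟩
  calc μ (range g) ≤ μ (g '' S n) + ∑ i ∈ Finset.range n, (δ i : ℝ≥0∞) := hsum n
    _ ≤ μ (g '' S n) + ε := by gcongr; exact (ENNReal.sum_le_tsum _).trans hδsum.le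
    _ = _ := by rw [hS]

variable [TopologicalSpace β] [OpensMeasurableSpace β] [FirstCountableTopology β] [T2Space β]

theorem exists_isCompact_measure_range_le {g : (ℕ → ℕ) → β} (hg : Continuous g) {ε : ℝ≥0∞}
    (hε : ε ≠ 0) : ∃ Q, IsCompact Q ∧ μ (range g) ≤ μ (g '' Q) + ε := by
  obtain ⟨v, hv⟩ := exists_measure_range_le_image_pi_Iio μ g hε
  refine ⟨univ.pi fun i => Iic (v i), isCompact_univ_pi fun i => (finite_Iic _).isCompact, ?_⟩
  have hanti : Antitone fun n => closure (g '' (Iio n).pi fun i => Iic (v i)) :=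
    fun a b hab => closure_mono (image_mono fun z hz i hi => hz i (lt_of_lt_of_le hi hab))
  calc μ (range g) ≤ ⨅ n, (μ (closure (g '' (Iio n).pi fun i => Iic (v i))) + ε) :=
        le_iInf fun n => (hv n).trans (by gcongr; exact subset_closure)
    _ = μ (⋂ n, closure (g '' (Iio n).pi fun i => Iic (v i))) + ε := by
      rw [← ENNReal.iInf_add, hanti.measure_iInter
        (fun n => isClosed_closure.measurableSet.nullMeasurableSet) ⟨0, measure_ne_top μ _⟩]
    _ ≤ μ (g '' univ.pi fun i => Iic (v i)) + ε := by
      gcongr; exact iInter_closure_image_pi_Iio_subset hg v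

theorem MeasureTheory.AnalyticSet.exists_isCompact_subset_measure_image_le {α : Type*}
    [TopologicalSpace α] {W : Set α} (hW : AnalyticSet W) {f : α → β} (hf : Continuous f)
    {ε : ℝ≥0∞} (hε : ε ≠ 0) :
    ∃ K ⊆ W, IsCompact K ∧ μ (f '' W) ≤ μ (f '' K) + ε := by
  rw [AnalyticSet] at hW
  rcases hW with rfl | ⟨σ, hσ, rfl⟩
  · exact ⟨∅, subset_rfl, isCompact_empty, by simp⟩
  obtain ⟨Q, hQ, hμQ⟩ := exists_isCompact_measure_range_le μ (hf.comp hσ) hε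
  refine ⟨σ '' Q, image_subset_range σ Q, hQ.image hσ, ?_⟩
  rwa [← range_comp, image_image]

end Capacity

theorem IsCompact.exists_measurable_section {β : Type*} [TopologicalSpace β] [T2Space β]
    [MeasurableSpace β] [OpensMeasurableSpace β] {K : Set (β × ℝ)} (hK : IsCompact K) :
    ∃ s : β → ℝ, Measurable s ∧ ∀ x ∈ Prod.fst '' K, (x, s x) ∈ K := by
  have hfiber : ∀ x, IsCompact {y | (x, y) ∈ K} := fun x =>
    (hK.image continuous_snd).of_isClosed_subset (hK.isClosed.preimage (.prodMk_right x))
      fun y hy => ⟨(x, y), hy, rfl⟩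
  have hmem : ∀ x ∈ Prod.fst '' K, sInf {y | (x, y) ∈ K} ∈ {y | (x, y) ∈ K} := by
    rintro x ⟨p, hp, rfl⟩
    exact (hfiber p.1).sInf_mem ⟨p.2, hp⟩
  refine ⟨fun x => sInf {y | (x, y) ∈ K}, measurable_of_Iic fun t => ?_, hmem⟩
  -- off `fst '' K` the fiber is empty and `sInf ∅ = 0`
  have hpre : (fun x => sInf {y | (x, y) ∈ K}) ⁻¹' Iic t =
      Prod.fst '' (K ∩ univ ×ˢ Iic t) ∪ (Prod.fst '' K)ᶜ ∩ {_x | 0 ≤ t} := by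
    ext x
    by_cases hx : x ∈ Prod.fst '' K
    · have hx' : x ∉ (Prod.fst '' K)ᶜ ∩ {_x | 0 ≤ t} := fun h => h.1 hx
      simp only [mem_preimage, mem_Iic, mem_union, hx', or_false]
      constructor
      · exact fun h => ⟨(x, _), ⟨hmem x hx, mem_univ _, h⟩, rfl⟩
      · rintro ⟨p, ⟨hpK, -, hpt⟩, rfl⟩
        exact (csInf_le (hfiber p.1).bddBelow hpK).trans hpt
    · have hempty : {y | (x, y) ∈ K} = ∅ :=
        eq_empty_of_forall_notMem fun y hy => hx ⟨(x, y), hy, rfl⟩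
      have hx' : x ∉ Prod.fst '' (K ∩ univ ×ˢ Iic t) := fun h => hx (image_mono inter_subset_left h)
      simp [hempty, hx, hx']
  rw [hpre]
  have hc : ∀ {L : Set (β × ℝ)}, IsCompact L → MeasurableSet (Prod.fst '' L) := fun hL =>
    (hL.image continuous_fst).isClosed.measurableSet
  exact (hc (hK.inter_right (isClosed_univ.prod isClosed_Iic))).union
    ((hc hK).compl.inter (MeasurableSet.const _))

section MeasurableSection

variable {X : Type*} [MeasurableSpace X] (μ : Measure X) [IsFiniteMeasure μ]

theorem exists_measurable_section_real_le_add [TopologicalSpace X] [PolishSpace X] [BorelSpace X]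
    {W : Set (X × ℝ)} (hW : MeasurableSet W) {ε : ℝ≥0∞} (hε : ε ≠ 0) :
    ∃ P s, MeasurableSet P ∧ Measurable s ∧ (∀ x ∈ P, (x, s x) ∈ W) ∧
      μ (Prod.fst '' W) ≤ μ P + ε := by
  obtain ⟨K, hKW, hK, hμK⟩ :=
    hW.analyticSet.exists_isCompact_subset_measure_image_le μ continuous_fst hε
  obtain ⟨s, hs, hsK⟩ := hK.exists_measurable_section
  exact ⟨_, s, (hK.image continuous_fst).isClosed.measurableSet, hs,
    fun x hx => hKW (hsK x hx), hμK⟩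

theorem exists_measurable_section_real [TopologicalSpace X] [PolishSpace X] [BorelSpace X]
    {W : Set (X × ℝ)} (hW : MeasurableSet W) :
    ∃ P s, MeasurableSet P ∧ Measurable s ∧ (∀ x ∈ P, (x, s x) ∈ W) ∧
      μ (Prod.fst '' W \ P) = 0 := by
  choose P s hP hs hPs hμP using fun n : ℕ =>
    exists_measurable_section_real_le_add μ hW (ENNReal.inv_ne_zero.2 (ENNReal.natCast_ne_top n))
  obtain ⟨f, hf, hfs⟩ := exists_measurable_piecewise (disjointed P) (.disjointed hP) s hs
    fun m n hmn => by simp [((disjoint_disjointed P) hmn).inter_eq]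
  refine ⟨⋃ n, P n, f, .iUnion hP, hf, fun x hx => ?_, ?_⟩
  · rw [← iUnion_disjointed] at hx
    obtain ⟨n, hn⟩ := mem_iUnion.1 hx
    rw [hfs n hn]
    exact hPs n x (disjointed_subset P n hn)
  · refine le_antisymm (ENNReal.le_of_forall_pos_le_add fun ε hε _ => ?_) bot_le
    obtain ⟨n, hn⟩ := ENNReal.exists_inv_nat_lt (ENNReal.coe_ne_zero.2 hε.ne')
    have hPn : P n ⊆ Prod.fst '' W ∩ ⋃ n, P n := fun x hx =>
      ⟨⟨(x, s n x), hPs n x hx, rfl⟩, mem_iUnion_of_mem n hx⟩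
    rw [zero_add]
    refine le_trans (ENNReal.le_of_add_le_add_right (measure_ne_top μ (P n)) ?_) hn.le
    calc μ (Prod.fst '' W \ ⋃ n, P n) + μ (P n)
        ≤ μ (Prod.fst '' W \ ⋃ n, P n) + μ (Prod.fst '' W ∩ ⋃ n, P n) := by gcongr
      _ = μ (Prod.fst '' W) := by rw [add_comm, measure_inter_add_sdiff _ (.iUnion hP)]
      _ ≤ μ (P n) + (n : ℝ≥0∞)⁻¹ := hμP n
      _ = (n : ℝ≥0∞)⁻¹ + μ (P n) := add_comm _ _

end MeasurableSection

theorem exists_measurable_section {X Y : Type*} [MeasurableSpace X] [StandardBorelSpace X]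
    [MeasurableSpace Y] [StandardBorelSpace Y] [Nonempty Y] (μ : Measure X) [IsFiniteMeasure μ]
    {W : Set (X × Y)} (hW : MeasurableSet W) :
    ∃ P s, MeasurableSet P ∧ Measurable s ∧ (∀ x ∈ P, (x, s x) ∈ W) ∧
      μ (Prod.fst '' W \ P) = 0 := by
  let := upgradeStandardBorel X
  have hg := measurableEmbedding_embeddingReal Y
  obtain ⟨r, hr, hrg⟩ := hg.exists_measurable_extend measurable_id fun _ => inferInstance
  have hW' : MeasurableSet (Prod.map id (embeddingReal Y) '' W) :=
    (MeasurableEmbedding.id.prodMap hg).measurableSet_image.2 hW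
  obtain ⟨P, s, hP, hs, hPs, hμP⟩ := exists_measurable_section_real μ hW'
  refine ⟨P, r ∘ s, hP, hr.comp hs, fun x hx => ?_, ?_⟩
  · obtain ⟨⟨x', y⟩, hy, hxy⟩ := hPs x hx
    simp only [Prod.map, id, Prod.mk.injEq] at hxy
    rw [comp_apply, ← hxy.2, ← comp_apply (f := r), hrg, id, ← hxy.1]
    exact hy
  · rwa [image_image] at hμP

theorem measure_setOf_lt_and_lt_eq_zero_iff {X : Type*} [MeasurableSpace X] (m : Measure X)
    (g : X → ℝ) (q : ℝ≥0∞) (x : X) :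
    m {z | g z < g x ∧ q < m {z}} = 0 ↔ ∀ z, q < m {z} → g x ≤ g z := by
  refine ⟨fun h z hz => not_lt.1 fun hzx => ?_, fun h => ?_⟩
  · exact (bot_le.trans_lt hz).ne' (measure_mono_null (by simpa using ⟨hzx, hz⟩) h)
  · rw [show {z | g z < g x ∧ q < m {z}} = ∅ from
      eq_empty_of_forall_notMem fun z hz => (h z hz.2).not_gt hz.1, measure_empty]

theorem exists_lt_measure_singleton_forall_le {X : Type*} [MeasurableSpace X]
    [MeasurableSingletonClass X] (m : Measure X) [IsFiniteMeasure m] {C : Set X}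
    (hC : C.Countable) (hmC : m Cᶜ = 0) (hm : m ≠ 0) (g : X → ℝ) :
    ∃ n : ℕ, ∃ x, (n : ℝ≥0∞)⁻¹ < m {x} ∧ ∀ z, (n : ℝ≥0∞)⁻¹ < m {z} → g x ≤ g z := by
  obtain ⟨x, hx⟩ : ∃ x, m {x} ≠ 0 := by
    by_contra! h
    refine hm (Measure.measure_univ_eq_zero.1 (le_antisymm ?_ bot_le))
    calc m univ ≤ m C + m Cᶜ := measure_univ_le_add_compl C
      _ = 0 := by rw [hmC, add_zero, ← biUnion_of_singleton C, measure_biUnion_null_iff hC]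
                  exact fun x _ => h x
  obtain ⟨n, hn⟩ := ENNReal.exists_inv_nat_lt hx
  have hfin : {z | (n : ℝ≥0∞)⁻¹ < m {z}}.Finite :=
    (Measure.finite_const_le_meas_of_disjoint_iUnion m
      (ENNReal.inv_pos.2 (ENNReal.natCast_ne_top n)) (As := fun z : X => {z})
      (fun _ => measurableSet_singleton _) (fun a b hab => disjoint_singleton.2 hab)
      (measure_ne_top m _)).subset fun z (h : _ < m {z}) => show _ ≤ m {z} from h.le
  obtain ⟨x₀, hx₀, hmin⟩ := exists_min_image _ g hfin ⟨x, hn⟩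
  exact ⟨n, x₀, hx₀, hmin⟩

theorem ProbabilityTheory.Kernel.measurableSet_lt_singleton_and_forall_le {X Y : Type*}
    [MeasurableSpace X] [MeasurableEq X] [MeasurableSpace Y] (κ : Kernel Y X) [IsSFiniteKernel κ]
    {s : X → Y} (hs : Measurable s) {g : X → ℝ} (hg : Measurable g) (q : ℝ≥0∞) :
    MeasurableSet {x | q < κ (s x) {x} ∧ ∀ z, q < κ (s x) {z} → g x ≤ g z} := by
  have hκ : ∀ {t : Set ((Y × X) × X)}, MeasurableSet t →
      Measurable fun p : Y × X => κ p.1 (Prod.mk p ⁻¹' t) := fun ht =>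
    (Kernel.prodMkRight X κ).measurable_kernel_prodMk_left ht
  have hatom : Measurable fun p : Y × X => κ p.1 {p.2} :=
    hκ (measurableSet_eq_fun measurable_snd measurable_fst.snd)
  have hbelow : Measurable fun p : Y × X => κ p.1 {z | g z < g p.2 ∧ q < κ p.1 {z}} :=
    hκ ((measurableSet_lt (hg.comp measurable_snd) (hg.comp measurable_fst.snd)).inter
      (measurableSet_lt measurable_const (hatom.comp (measurable_fst.fst.prodMk measurable_snd))))
  have hsx : Measurable fun x => (s x, x) := hs.prodMk measurable_id
  simp_rw [← measure_setOf_lt_and_lt_eq_zero_iff]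
  exact ((hatom.comp hsx) measurableSet_Ioi).inter ((hbelow.comp hsx) (measurableSet_singleton 0))

theorem exists_isMarkovKernel_disintegration {X Y : Type*} [MeasurableSpace X]
    [StandardBorelSpace X] [Nonempty X] [MeasurableSpace Y] [MeasurableEq Y] (μ : Measure X)
    [IsFiniteMeasure μ] {P : Set X} (hP : MeasurableSet P) {s : X → Y} (hs : Measurable s) :
    ∃ (ν : Measure Y) (κ : Kernel Y X), IsMarkovKernel κ ∧ ν univ = μ P ∧
      (∀ t, MeasurableSet t → t ⊆ P → μ t = ∫⁻ y, κ y t ∂ν) ∧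
      ∀ᵐ y ∂ν, κ y (P ∩ s ⁻¹' {y})ᶜ = 0 := by
  have hsx : Measurable fun x => (s x, x) := hs.prodMk measurable_id
  let ρ : Measure (Y × X) := (μ.restrict P).map fun x => (s x, x)
  refine ⟨ρ.fst, ρ.condKernel, inferInstance, ?_, fun t ht htP => ?_, ?_⟩
  · rw [Measure.fst_univ, Measure.map_apply hsx .univ]
    simp
  · rw [← setLIntegral_univ, ← Measure.compProd_apply_prod MeasurableSet.univ ht,
      ρ.disintegrate ρ.condKernel, Measure.map_apply hsx (MeasurableSet.univ.prod ht),
      Measure.restrict_apply (hsx (MeasurableSet.univ.prod ht)), mk_preimage_prod,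
      preimage_univ, univ_inter, preimage_id', inter_eq_left.2 htP]
  · have hgr : MeasurableSet {p : Y × X | p.2 ∈ P ∧ s p.2 = p.1} :=
      (hP.preimage measurable_snd).inter
        (measurableSet_eq_fun (hs.comp measurable_snd) measurable_fst)
    have h0 : ρ {p : Y × X | p.2 ∈ P ∧ s p.2 = p.1}ᶜ = 0 := by
      rw [Measure.map_apply hsx hgr.compl, Measure.restrict_apply (hsx hgr.compl)]
      exact measure_mono_null (fun x hx => hx.1 ⟨hx.2, rfl⟩) (measure_empty (μ := μ))
    rw [← ρ.disintegrate ρ.condKernel, Measure.compProd_apply hgr.compl,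
      lintegral_eq_zero_iff (Kernel.measurable_kernel_prodMk_left hgr.compl)] at h0
    filter_upwards [h0] with y (hy : ρ.condKernel y _ = 0)
    exact measure_mono_null (fun x hx (h : x ∈ P ∧ s x = y) => hx h) hy

theorem exists_injOn_measure_ne_zero {X Y : Type*} [MeasurableSpace X] [StandardBorelSpace X]
    [MeasurableSpace Y] [MeasurableEq Y] (μ : Measure X) [IsFiniteMeasure μ] {P : Set X}
    (hP : MeasurableSet P) (hμP : μ P ≠ 0) {s : X → Y} (hs : Measurable s)
    (hfiber : ∀ y, (P ∩ s ⁻¹' {y}).Countable) :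
    ∃ A ⊆ P, MeasurableSet A ∧ μ A ≠ 0 ∧ InjOn s A := by
  have : Nonempty X := ⟨(nonempty_of_measure_ne_zero hμP).some⟩
  obtain ⟨ν, κ, hκ, hν, hdis, hconc⟩ := exists_isMarkovKernel_disintegration μ hP hs
  let g := embeddingReal X
  have hg := measurableEmbedding_embeddingReal X
  -- `A n` is the set of points `x ∈ P` that are the `g`-least atom of mass `> n⁻¹` of `κ (s x)`
  let A : ℕ → Set X := fun n =>
    P ∩ {x | (n : ℝ≥0∞)⁻¹ < κ (s x) {x} ∧ ∀ z, (n : ℝ≥0∞)⁻¹ < κ (s x) {z} → g x ≤ g z}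
  have hA : ∀ n, MeasurableSet (A n) := fun n =>
    hP.inter (κ.measurableSet_lt_singleton_and_forall_le hs hg.measurable _)
  have hAinj : ∀ n, InjOn s (A n) := fun n a ha b hb hab =>
    hg.injective (le_antisymm (ha.2.2 b (hab ▸ hb.2.1)) (hb.2.2 a (hab ▸ ha.2.1)))
  by_contra! hnull
  have hκA : ∀ᵐ y ∂ν, ∀ n, κ y (A n) = 0 := ae_all_iff.2 fun n => by
    refine (lintegral_eq_zero_iff (κ.measurable_coe (hA n))).1 ?_
    rw [← hdis _ (hA n) fun x hx => hx.1]
    exact by_contra fun h => hnull (A n) (fun x hx => hx.1) (hA n) h (hAinj n)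
  have := ae_neBot.2 (Measure.measure_univ_ne_zero.1 (hν ▸ hμP))
  obtain ⟨y, hyconc, hyA⟩ := (hconc.and hκA).exists
  obtain ⟨n, x, hx, hxmin⟩ := exists_lt_measure_singleton_forall_le (κ y)
    (hfiber y) hyconc (IsProbabilityMeasure.ne_zero _) g
  have hxy : x ∈ P ∩ s ⁻¹' {y} := by
    by_contra hxy
    exact (bot_le.trans_lt hx).ne' (measure_mono_null (singleton_subset_iff.2 hxy) hyconc)
  have hsxy : s x = y := hxy.2
  refine (bot_le.trans_lt hx).ne' (measure_mono_null (singleton_subset_iff.2 ?_) (hyA n))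
  exact ⟨hxy.1, hsxy ▸ hx, hsxy ▸ hxmin⟩

theorem exists_subset_disjoint_image {X : Type*} [MeasurableSpace X]
    [MeasurableSpace.CountablySeparated X] (μ : Measure X) {A : Set X} (hA : MeasurableSet A)
    (hμA : μ A ≠ 0) {s : X → X} (hs : Measurable s) (hfix : ∀ x ∈ A, s x ≠ x) :
    ∃ B ⊆ A, MeasurableSet B ∧ μ B ≠ 0 ∧ Disjoint B (s '' B) := by
  obtain ⟨S, hS, hsep⟩ := exists_seq_separating X MeasurableSet.empty univ
  let U : ℕ × Bool → Set X := fun p => bif p.2 then S p.1 else (S p.1)ᶜ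
  have hU : ∀ p, MeasurableSet (U p) := fun ⟨n, b⟩ => by cases b <;> simp [U, hS n]
  have hcover : A ⊆ ⋃ p, A ∩ U p ∩ s ⁻¹' (U p)ᶜ := by
    intro x hx
    obtain ⟨n, hn⟩ : ∃ n, ¬(s x ∈ S n ↔ x ∈ S n) := by
      by_contra! h
      exact hfix x hx (hsep _ trivial _ trivial h)
    by_cases hxn : x ∈ S n
    · exact mem_iUnion.2 ⟨(n, true), ⟨hx, hxn⟩, fun h => hn (iff_of_true h hxn)⟩
    · exact mem_iUnion.2 ⟨(n, false), ⟨hx, hxn⟩, fun h => hn (iff_of_false h hxn)⟩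
  obtain ⟨p, hp⟩ : ∃ p, μ (A ∩ U p ∩ s ⁻¹' (U p)ᶜ) ≠ 0 := by
    by_contra! h
    exact hμA (measure_mono_null hcover (measure_iUnion_null h))
  refine ⟨_, fun x hx => hx.1.1, (hA.inter (hU p)).inter (hs (hU p).compl), hp, ?_⟩
  exact disjoint_compl_right.mono (fun x hx => hx.1.2) (image_subset_iff.2 fun x hx => hx.2)

theorem exists_involutive_swap {X : Type*} [MeasurableSpace X] [StandardBorelSpace X]
    {B : Set X} (hB : MeasurableSet B) {s : X → X} (hs : Measurable s) (hinj : InjOn s B)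
    (hdisj : Disjoint B (s '' B)) :
    ∃ τ : X → X, Measurable τ ∧ Involutive τ ∧ EqOn τ s B ∧ EqOn τ id (B ∪ s '' B)ᶜ := by
  classical
  have := hB.standardBorel
  rcases isEmpty_or_nonempty X with hX | hX
  · exact ⟨id, measurable_id, fun _ => rfl, fun x => isEmptyElim x, fun _ _ => rfl⟩
  obtain ⟨ψ, hψ, hψs⟩ := ((hs.comp measurable_subtype_coe).measurableEmbedding
    (injOn_iff_injective.1 hinj)).exists_measurable_extend measurable_subtype_coe fun _ => hX
  have hψs' : ∀ x ∈ B, ψ (s x) = x := fun x hx => congrFun hψs ⟨x, hx⟩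
  have hsB : ∀ x ∈ B, s x ∉ B := fun x hx hsx => hdisj.ne_of_mem hsx (mem_image_of_mem s hx) rfl
  refine ⟨B.piecewise s ((s '' B).piecewise ψ id), Measurable.piecewise hB hs
    (Measurable.piecewise (hB.image_of_measurable_injOn hs hinj) hψ measurable_id), fun x => ?_,
    fun x hx => piecewise_eq_of_mem _ _ _ hx, fun x hx => ?_⟩
  · by_cases hx : x ∈ B
    · rw [piecewise_eq_of_mem _ _ _ hx, piecewise_eq_of_notMem _ _ _ (hsB x hx),
        piecewise_eq_of_mem _ _ _ (mem_image_of_mem s hx), hψs' x hx]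
    by_cases hx' : x ∈ s '' B
    · obtain ⟨b, hb, rfl⟩ := hx'
      rw [piecewise_eq_of_notMem _ _ _ hx, piecewise_eq_of_mem _ _ _ (mem_image_of_mem s hb),
        hψs' b hb, piecewise_eq_of_mem _ _ _ hb]
    · have hfix : B.piecewise s ((s '' B).piecewise ψ id) x = x := by
        rw [piecewise_eq_of_notMem _ _ _ hx, piecewise_eq_of_notMem _ _ _ hx', id]
      rw [hfix, hfix]
  · rw [mem_compl_iff, mem_union, not_or] at hx
    rw [piecewise_eq_of_notMem _ _ _ hx.1, piecewise_eq_of_notMem _ _ _ hx.2]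

theorem Function.Involutive.apply_eq_self_or_swap {X : Type*} {τ s : X → X} {B : Set X}
    (hτ : Involutive τ) (hτs : EqOn τ s B) (hτid : EqOn τ id (B ∪ s '' B)ᶜ) (x : X) :
    τ x = x ∨ (x ∈ B ∧ τ x = s x) ∨ (τ x ∈ B ∧ s (τ x) = x) := by
  by_cases hxB : x ∈ B
  · exact .inr (.inl ⟨hxB, hτs hxB⟩)
  by_cases hxs : x ∈ s '' B
  · obtain ⟨b, hb, rfl⟩ := hxs
    have hτb : τ (s b) = b := by rw [← hτs hb, hτ]
    rw [hτb]
    exact .inr (.inr ⟨hb, rfl⟩)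
  · exact .inl (hτid fun h => h.elim hxB hxs)

theorem exists_involutive_measure_support_ne_zero {X : Type*} [MeasurableSpace X]
    [StandardBorelSpace X] (μ : Measure X) [IsFiniteMeasure μ] {W : Set (X × X)}
    (hW : MeasurableSet W) (hdiag : ∀ p ∈ W, p.1 ≠ p.2) (hcount : ∀ y, {x | (x, y) ∈ W}.Countable)
    (hμW : μ (Prod.fst '' W) ≠ 0) :
    ∃ κ : X → X, Measurable κ ∧ Involutive κ ∧ (∀ x, κ x ≠ x → (x, κ x) ∈ W ∨ (κ x, x) ∈ W) ∧
      μ {x | κ x ≠ x} ≠ 0 := by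
  have : Nonempty X := ⟨(nonempty_of_measure_ne_zero hμW).some⟩
  obtain ⟨P, s, hP, hs, hPs, hμP⟩ := exists_measurable_section μ hW
  replace hμP : μ P ≠ 0 := fun h => hμW (measure_mono_null
    (fun x hx => (em (x ∈ P)).elim Or.inr fun h' => Or.inl ⟨hx, h'⟩) (measure_union_null hμP h))
  obtain ⟨A, hAP, hA, hμA, hAinj⟩ := exists_injOn_measure_ne_zero μ hP hμP hs
    fun y => (hcount y).mono fun x hx => hx.2 ▸ hPs x hx.1
  obtain ⟨B, hBA, hB, hμB, hdisj⟩ := exists_subset_disjoint_image μ hA hμA hs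
    fun x hx => (hdiag _ (hPs x (hAP hx))).symm
  obtain ⟨τ, hτ, hτinv, hτs, hτid⟩ := exists_involutive_swap hB hs (hAinj.mono hBA) hdisj
  refine ⟨τ, hτ, hτinv, fun x hx => ?_, fun h => hμB (measure_mono_null (fun x hx => ?_) h)⟩
  · rcases hτinv.apply_eq_self_or_swap hτs hτid x with h | ⟨hxB, h⟩ | ⟨hxB, h⟩
    · exact absurd h hx
    · exact .inl (h ▸ hPs x (hAP (hBA hxB)))
    · exact .inr (by simpa only [h] using hPs _ (hAP (hBA hxB)))
  · show τ x ≠ x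
    rw [hτs hx]
    exact (hdiag _ (hPs x (hAP (hBA hx)))).symm

theorem exists_mem_disjoint_forall_le_two_mul {X : Type*} [MeasurableSpace X] (μ : Measure X)
    [IsFiniteMeasure μ] {𝒞 : Set (Set X)} (hempty : ∅ ∈ 𝒞) (T : Set X) :
    ∃ D ∈ 𝒞, Disjoint T D ∧ ∀ D' ∈ 𝒞, Disjoint T D' → μ D' ≤ 2 * μ D := by
  set gain := ⨆ D' ∈ {D' | D' ∈ 𝒞 ∧ Disjoint T D'}, μ D'
  have hle : ∀ D' ∈ 𝒞, Disjoint T D' → μ D' ≤ gain := fun D' hD' hT =>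
    le_iSup₂ (f := fun D' (_ : D' ∈ {D' | D' ∈ 𝒞 ∧ Disjoint T D'}) => μ D') D' ⟨hD', hT⟩
  by_cases h0 : gain = 0
  · exact ⟨∅, hempty, disjoint_empty T, fun D' hD' hT => (hle D' hD' hT).trans (by simp [h0])⟩
  have hfin : gain ≠ ⊤ := ne_top_of_le_ne_top (measure_ne_top μ univ)
    (iSup₂_le fun D' _ => measure_mono (subset_univ D'))
  obtain ⟨D, hD⟩ := lt_iSup_iff.1 (ENNReal.half_lt_self h0 hfin)
  obtain ⟨⟨hD, hTD⟩, hlt⟩ := lt_iSup_iff.1 hD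
  refine ⟨D, hD, hTD, fun D' hD' hT => (hle D' hD' hT).trans ?_⟩
  calc gain = 2 * (gain / 2) := (ENNReal.mul_div_cancel two_ne_zero ENNReal.ofNat_ne_top).symm
    _ ≤ 2 * μ D := by gcongr

theorem exists_forall_disjoint_measure_eq_zero {X : Type*} [MeasurableSpace X] (μ : Measure X)
    [IsFiniteMeasure μ] {𝒞 : Set (Set X)} (h𝒞 : ∀ C ∈ 𝒞, MeasurableSet C) (hempty : ∅ ∈ 𝒞)
    (hunion : ∀ C : ℕ → Set X, (∀ n, C n ∈ 𝒞) → Pairwise (Disjoint on C) → ⋃ n, C n ∈ 𝒞) :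
    ∃ T ∈ 𝒞, ∀ D ∈ 𝒞, Disjoint T D → μ D = 0 := by
  -- greedily add a set that captures at least half of the available mass
  choose next hnext hnextT hnextmax using exists_mem_disjoint_forall_le_two_mul μ hempty
  let T : ℕ → Set X := fun n => Nat.rec ∅ (fun _ T => T ∪ next T) n
  let C : ℕ → Set X := fun n => next (T n)
  have hTmono : Monotone T := monotone_nat_of_le_succ fun n => subset_union_left
  have hCT : ∀ m n, m < n → C m ⊆ T n := fun m n hmn =>
    (subset_union_right : C m ⊆ T (m + 1)).trans (hTmono hmn)
  have hTC : ∀ n, T n ⊆ ⋃ m, C m := by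
    intro n
    induction n with
    | zero => exact empty_subset _
    | succ n ih => exact union_subset ih (subset_iUnion C n)
  have hCdisj : Pairwise (Disjoint on C) := by
    intro m n hmn
    rcases hmn.lt_or_gt with h | h
    · exact (hnextT (T n)).mono_left (hCT m n h)
    · exact ((hnextT (T m)).mono_left (hCT n m h)).symm
  refine ⟨⋃ n, C n, hunion C (fun n => hnext _) hCdisj, fun D hD hdisj => ?_⟩
  have hCμ : Tendsto (fun n => 2 * μ (C n)) atTop (𝓝 0) := by
    have h := ENNReal.tendsto_atTop_zero_of_tsum_ne_top (f := fun n => μ (C n))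
      (by rw [← measure_iUnion hCdisj fun n => h𝒞 _ (hnext _)]; exact measure_ne_top μ _)
    simpa using ENNReal.Tendsto.const_mul h (.inr ENNReal.ofNat_ne_top)
  exact le_antisymm (ge_of_tendsto' hCμ fun n =>
    hnextmax (T n) D hD (hdisj.mono_left (hTC n))) bot_le

theorem exists_involutive_eqOn_iUnion {X : Type*} [MeasurableSpace X] [MeasurableEq X]
    {κ : ℕ → X → X} (hκ : ∀ n, Measurable (κ n)) (hinv : ∀ n, Involutive (κ n))
    (hdisj : Pairwise (Disjoint on fun n => {x | κ n x ≠ x})) :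
    ∃ ι : X → X, Measurable ι ∧ Involutive ι ∧ (∀ n, EqOn ι (κ n) {x | κ n x ≠ x}) ∧
      {x | ι x ≠ x} = ⋃ n, {x | κ n x ≠ x} := by
  have hsupp : ∀ n, MeasurableSet {x | κ n x ≠ x} := fun n =>
    (measurableSet_eq_fun (hκ n) measurable_id).compl
  let t : Option ℕ → Set X := fun o => o.elim (⋃ n, {x | κ n x ≠ x})ᶜ fun n => {x | κ n x ≠ x}
  let g : Option ℕ → X → X := fun o => o.elim id κ
  obtain ⟨ι, hι, hιg⟩ := exists_measurable_piecewise t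
    (fun o => o.casesOn (MeasurableSet.iUnion hsupp).compl hsupp) g
    (fun o => o.casesOn measurable_id hκ) fun o o' hoo' => by
      rcases o with _ | m <;> rcases o' with _ | n
      · exact absurd rfl hoo'
      · exact fun x hx => absurd (mem_iUnion_of_mem n hx.2) hx.1
      · exact fun x hx => absurd (mem_iUnion_of_mem m hx.1) hx.2
      · exact fun x hx => ((hdisj fun h => hoo' (congrArg some h)).ne_of_mem hx.1 hx.2 rfl).elim
  have hικ : ∀ n, EqOn ι (κ n) {x | κ n x ≠ x} := fun n => hιg (some n)
  have hιid : ∀ x ∉ ⋃ n, {x | κ n x ≠ x}, ι x = x := fun x hx => hιg none hx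
  have hκsupp : ∀ n x, κ n x ≠ x → κ n (κ n x) ≠ κ n x := fun n x hx h => hx (by rw [← h, hinv])
  refine ⟨ι, hι, fun x => ?_, hικ, ?_⟩
  · by_cases hx : ∃ n, κ n x ≠ x
    · obtain ⟨n, hn⟩ := hx
      rw [hικ n hn, hικ n (hκsupp n x hn), hinv]
    · have hx' : x ∉ ⋃ n, {x | κ n x ≠ x} := by simpa using hx
      rw [hιid x hx', hιid x hx']
  · ext x
    refine ⟨fun hx => by_contra fun h => hx (hιid x h), fun hx => ?_⟩
    obtain ⟨n, hn⟩ := mem_iUnion.1 hx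
    exact (hικ n hn).trans_ne hn

theorem exists_involutive_measure_fst_fixed_eq_zero {X : Type*} [MeasurableSpace X]
    [StandardBorelSpace X] (μ : Measure X) [IsFiniteMeasure μ] {R : Set (X × X)}
    (hR : MeasurableSet R) (hEquiv : Equivalence fun x y => (x, y) ∈ R)
    (hCount : ∀ x, {y | (x, y) ∈ R}.Countable) :
    ∃ ι : X → X, Measurable ι ∧ Involutive ι ∧ (∀ x, (x, ι x) ∈ R) ∧
      μ (Prod.fst '' {p | p ∈ R ∧ ι p.1 = p.1 ∧ ι p.2 = p.2 ∧ p.1 ≠ p.2}) = 0 := by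
  let 𝒞 : Set (Set X) := {T | ∃ κ : X → X, Measurable κ ∧ Involutive κ ∧
    (∀ x, (x, κ x) ∈ R) ∧ {x | κ x ≠ x} = T}
  have h𝒞 : ∀ C ∈ 𝒞, MeasurableSet C := by
    rintro _ ⟨κ, hκ, -, -, rfl⟩
    exact (measurableSet_eq_fun hκ measurable_id).compl
  have hempty : ∅ ∈ 𝒞 := ⟨id, measurable_id, fun _ => rfl, hEquiv.refl, by simp⟩
  have hunion : ∀ C : ℕ → Set X, (∀ n, C n ∈ 𝒞) → Pairwise (Disjoint on C) → ⋃ n, C n ∈ 𝒞 := by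
    intro C hC hdisj
    choose κ hκ hκinv hκR hκC using hC
    obtain ⟨ι, hι, hιinv, hικ, hιsupp⟩ :=
      exists_involutive_eqOn_iUnion hκ hκinv (by simpa only [hκC] using hdisj)
    refine ⟨ι, hι, hιinv, fun x => ?_, by simp only [hιsupp, hκC]⟩
    by_cases hx : ι x = x
    · rw [hx]; exact hEquiv.refl x
    · obtain ⟨n, hn⟩ := mem_iUnion.1 (hιsupp ▸ hx : x ∈ ⋃ n, {x | κ n x ≠ x})
      exact hικ n hn ▸ hκR n x
  obtain ⟨_, ⟨ι, hι, hιinv, hιR, rfl⟩, hmax⟩ :=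
    exists_forall_disjoint_measure_eq_zero μ h𝒞 hempty hunion
  refine ⟨ι, hι, hιinv, hιR, by_contra fun hpos => ?_⟩
  have hW : MeasurableSet {p | p ∈ R ∧ ι p.1 = p.1 ∧ ι p.2 = p.2 ∧ p.1 ≠ p.2} :=
    hR.inter ((measurableSet_eq_fun (hι.comp measurable_fst) measurable_fst).inter
      ((measurableSet_eq_fun (hι.comp measurable_snd) measurable_snd).inter
        (measurableSet_eq_fun measurable_fst measurable_snd).compl))
  obtain ⟨κ, hκ, hκinv, hκW, hκpos⟩ := exists_involutive_measure_support_ne_zero μ hW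
    (fun p hp => hp.2.2.2) (fun y => (hCount y).mono fun x hx => hEquiv.symm hx.1) hpos
  refine hκpos (hmax _ ⟨κ, hκ, hκinv, fun x => ?_, rfl⟩ ?_)
  · by_cases hx : κ x = x
    · rw [hx]; exact hEquiv.refl x
    · exact (hκW x hx).elim (fun h => h.1) fun h => hEquiv.symm h.1
  · refine disjoint_left.2 fun x hιx hκx => hιx ?_
    exact (hκW x hκx).elim (fun h => h.2.1) fun h => h.2.2.1

theorem union_subset_setOf_comp_ne {X : Type*} {ι τ j : X → X} {Λ : Set X} (hι : Involutive ι)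
    (hτ : Involutive τ) (hτj : EqOn τ j Λ) (hτid : EqOn τ id (Λ ∪ j '' Λ)ᶜ)
    (hΛ : ∀ x ∈ Λ, ι x = x ∧ j x ≠ x) : {x | ι x ≠ x} ∪ Λ ⊆ {x | ι (τ x) ≠ x} := by
  intro x hx h
  by_cases hxΛ : x ∈ Λ
  · -- `ι (j x) = x` would force `j x = ι x = x`
    rw [hτj hxΛ] at h
    exact (hΛ x hxΛ).2 (by rw [← hι (j x), h, (hΛ x hxΛ).1])
  by_cases hxj : x ∈ j '' Λ
  · obtain ⟨b, hb, rfl⟩ := hxj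
    rw [← hτj hb, hτ, (hΛ b hb).1, hτj hb] at h
    exact (hΛ b hb).2 h.symm
  · rw [hτid (by simp [hxΛ, hxj]), id] at h
    exact hx.elim (· h) hxΛ

def Function.Involutive.toMeasurableEquiv {X : Type*} [MeasurableSpace X] {f : X → X}
    (hf : Involutive f) (hm : Measurable f) : X ≃ᵐ X where
  toEquiv := hf.toPerm f
  measurable_toFun := hm
  measurable_invFun := hm

theorem exists_injOn_partner {X : Type*} [MeasurableSpace X] [StandardBorelSpace X] [Nonempty X]
    (μ : Measure X) [IsFiniteMeasure μ] {R : Set (X × X)} (hR : MeasurableSet R)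
    (hEquiv : Equivalence fun x y => (x, y) ∈ R) {ι : X → X} (hι : Measurable ι)
    (hfix : μ (Prod.fst '' {p | p ∈ R ∧ ι p.1 = p.1 ∧ ι p.2 = p.2 ∧ p.1 ≠ p.2}) = 0) :
    ∃ Λ j, MeasurableSet Λ ∧ Measurable j ∧ InjOn j Λ ∧
      (∀ x ∈ Λ, (x, j x) ∈ R ∧ ι x = x ∧ ι (j x) ≠ j x) ∧
      μ ({x | ι x = x ∧ ∃ y, (x, y) ∈ R ∧ y ≠ x} \ Λ) = 0 := by
  have hW : MeasurableSet {p : X × X | p ∈ R ∧ ι p.1 = p.1 ∧ p.1 ≠ p.2} :=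
    hR.inter ((measurableSet_eq_fun (hι.comp measurable_fst) measurable_fst).inter
      (measurableSet_eq_fun measurable_fst measurable_snd).compl)
  obtain ⟨P, j, hP, hj, hPj, hμP⟩ := exists_measurable_section μ hW
  set N := toMeasurable μ (Prod.fst '' {p | p ∈ R ∧ ι p.1 = p.1 ∧ ι p.2 = p.2 ∧ p.1 ≠ p.2})
  have hlone : ∀ x ∈ P \ N, ∀ y, (x, y) ∈ R → ι y = y → y = x := fun x hx y hxy hy =>
    by_contra fun hne => hx.2 (subset_toMeasurable μ _
      ⟨(x, y), ⟨hxy, (hPj x hx.1).2.1, hy, Ne.symm hne⟩, rfl⟩)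
  refine ⟨P \ N, j, hP.diff (measurableSet_toMeasurable μ _), hj, fun x hx x' hx' h => ?_,
    fun x hx => ⟨(hPj x hx.1).1, (hPj x hx.1).2.1, fun h => (hPj x hx.1).2.2 ?_⟩,
    measure_mono_null (t := (Prod.fst '' {p | p ∈ R ∧ ι p.1 = p.1 ∧ p.1 ≠ p.2} \ P) ∪ N) ?_
      (measure_union_null hμP (by rw [measure_toMeasurable]; exact hfix))⟩
  · exact (hlone x hx x' (hEquiv.trans (hPj x hx.1).1 (h ▸ hEquiv.symm (hPj x' hx'.1).1))
      (hPj x' hx'.1).2.1).symm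
  · exact (hlone x hx (j x) (hPj x hx.1).1 h).symm
  · rintro x ⟨⟨hιx, y, hy, hyx⟩, hx⟩
    by_cases hxP : x ∈ P
    · exact .inr (by_contra fun hN => hx ⟨hxP, hN⟩)
    · exact .inl ⟨⟨(x, y), ⟨hy, hιx, hyx.symm⟩, rfl⟩, hxP⟩

theorem exists_measurableEquiv_measure_symmDiff_eq_zero {X : Type*} [MeasurableSpace X]
    [StandardBorelSpace X] [Nonempty X] (μ : Measure X) [IsFiniteMeasure μ] {R : Set (X × X)}
    (hR : MeasurableSet R) (hEquiv : Equivalence fun x y => (x, y) ∈ R) {ι : X → X}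
    (hι : Measurable ι) (hιinv : Involutive ι) (hιR : ∀ x, (x, ι x) ∈ R)
    (hfix : μ (Prod.fst '' {p | p ∈ R ∧ ι p.1 = p.1 ∧ ι p.2 = p.2 ∧ p.1 ≠ p.2}) = 0) :
    ∃ α : X ≃ᵐ X, (∀ x, (x, α x) ∈ R) ∧
      μ (symmDiff {x | α x ≠ x} {x | Set.Nontrivial {y | (x, y) ∈ R}}) = 0 := by
  obtain ⟨Λ, j, hΛ, hj, hjinj, hjΛ, hμΛ⟩ := exists_injOn_partner μ hR hEquiv hι hfix
  have hjx : ∀ x ∈ Λ, ι x = x ∧ j x ≠ x := fun x hx =>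
    ⟨(hjΛ x hx).2.1, fun h => (hjΛ x hx).2.2 (by rw [h, (hjΛ x hx).2.1])⟩
  have hdisj : Disjoint Λ (j '' Λ) := disjoint_left.2 fun x hx ⟨b, hb, hbx⟩ =>
    (hjΛ b hb).2.2 (hbx ▸ (hjx x hx).1)
  obtain ⟨τ, hτ, hτinv, hτj, hτid⟩ := exists_involutive_swap hΛ hj hjinj hdisj
  have hτR : ∀ x, (x, τ x) ∈ R := by
    intro x
    rcases hτinv.apply_eq_self_or_swap hτj hτid x with h | ⟨hxΛ, h⟩ | ⟨hxΛ, h⟩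
    · rw [h]
      exact hEquiv.refl x
    · exact h ▸ (hjΛ x hxΛ).1
    · exact hEquiv.symm (by simpa only [h] using (hjΛ _ hxΛ).1)
  refine ⟨(hτinv.toMeasurableEquiv hτ).trans (hιinv.toMeasurableEquiv hι),
    fun x => hEquiv.trans (hτR x) (hιR (τ x)), measure_mono_null ?_ hμΛ⟩
  rintro x (⟨hαx, hx⟩ | ⟨hx, hαx⟩)
  · exact absurd ⟨x, hEquiv.refl x, ι (τ x), hEquiv.trans (hτR x) (hιR (τ x)), Ne.symm hαx⟩ hx
  · have hxΛ : x ∉ {x | ι x ≠ x} ∪ Λ := fun h =>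
      hαx (union_subset_setOf_comp_ne hιinv hτinv hτj hτid hjx h)
    obtain ⟨y, hy, hyx⟩ := (nontrivial_iff_exists_ne (s := {y | (x, y) ∈ R}) (hEquiv.refl x)).1 hx
    exact ⟨⟨by_contra fun h => hxΛ (.inl h), y, hy, hyx⟩, fun h => hxΛ (.inr h)⟩

/-- for a countable Borel equivalence relation `R` on a standard probability
space `(X,μ)` there is a Borel automorphism `α` of `X` with `(x, α x) ∈ R` for all `x`,
whose support is, up to a `μ`-null set, the set `Per_{≥2}(R)` of points whose `R`-class
has at least two elements. -/
theorem exists_aut_support_per {X : Type*} [MeasurableSpace X] [StandardBorelSpace X]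
    (μ : Measure X) [IsProbabilityMeasure μ] (R : Set (X × X)) (hR : MeasurableSet R)
    (hEquiv : Equivalence fun x y => (x, y) ∈ R)
    (hCount : ∀ x : X, {y | (x, y) ∈ R}.Countable) :
    ∃ α : X ≃ᵐ X, (∀ x, (x, α x) ∈ R) ∧
      μ (symmDiff {x | α x ≠ x} {x | Set.Nontrivial {y | (x, y) ∈ R}}) = 0 := by
  have := nonempty_of_isProbabilityMeasure μ
  obtain ⟨ι, hι, hιinv, hιR, hfix⟩ :=
    exists_involutive_measure_fst_fixed_eq_zero μ hR hEquiv hCount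
  exact exists_measurableEquiv_measure_symmDiff_eq_zero μ hR hEquiv hι hιinv hιR hfix
end
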